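/- arXiv:2308.10404 — 6 statements merged into one kernel-verified Lean document; each statement's English description precedes it below -/
import Mathlib

section
/- Let A ⊂ ℝ^d be a finite set with #A ≥ 2. Then for any ℓ distinct points t₁, t₂, …, t_ℓ ∈ ℝ^d with 1 ≤ ℓ ≤ #A + 1, the intersection ⋂_{j=1}^ℓ (A + t_j) has cardinality at most #A + 1 − ℓ. -/
noncomputable instance lexGroupAux (d : ℕ) : IsOrderedAddMonoid (Lex (Fin d → ℝ)) :=
  inferInstance

open Finset in
lemma key_translate_lemma {G : Type*} [AddCommGroup G] [LinearOrder G] [IsOrderedAddMonoid G] (A : Finset G) {ℓ : ℕ}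
    (hℓ : 1 ≤ ℓ) (t : Fin ℓ → G) (ht : Function.Injective t) :
    (⋂ j : Fin ℓ, (fun a => a + t j) '' (A : Set G)).ncard ≤ A.card + 1 - ℓ := by
  classical
  set T : Set G := ⋂ j : Fin ℓ, (fun a => a + t j) '' (A : Set G) with hT
  have j0' : Fin ℓ := ⟨0, hℓ⟩
  have hTsub : ∀ j, T ⊆ (fun a => a + t j) '' (A : Set G) := fun j => Set.iInter_subset _ j
  have hTfin : T.Finite := ((A.finite_toSet).image _).subset (hTsub j0')
  rcases T.eq_empty_or_nonempty with h | h
  · simp [h]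
  set F : Finset G := hTfin.toFinset with hF
  have hFmem : ∀ {x}, x ∈ F ↔ x ∈ T := fun {x} => hTfin.mem_toFinset
  have hFne : F.Nonempty := by
    obtain ⟨x, hx⟩ := h
    exact ⟨x, hFmem.2 hx⟩
  set x := F.max' hFne with hx
  have hxT : x ∈ T := hFmem.1 (F.max'_mem hFne)
  obtain ⟨j0, -, hj0⟩ := Finset.exists_max_image Finset.univ t ⟨j0', mem_univ _⟩
  set B : Finset G := F.image (fun s => s - t j0) with hB
  set C : Finset G := Finset.univ.image (fun j => x - t j) with hC
  have hBA : B ⊆ A := by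
    intro y hy
    obtain ⟨s, hs, rfl⟩ := Finset.mem_image.1 hy
    obtain ⟨a, ha, hae⟩ := hTsub j0 (hFmem.1 hs)
    simpa [← hae] using ha
  have hCA : C ⊆ A := by
    intro y hy
    obtain ⟨j, -, rfl⟩ := Finset.mem_image.1 hy
    obtain ⟨a, ha, hae⟩ := hTsub j hxT
    simpa [← hae] using ha
  have hBcard : B.card = F.card := Finset.card_image_of_injective _ (sub_left_injective)
  have hCcard : C.card = ℓ := by
    rw [Finset.card_image_of_injective _ (fun a b hab => ht (by
      simpa using sub_right_injective hab)), Finset.card_univ, Fintype.card_fin]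
  have hInter : B ∩ C = {x - t j0} := by
    apply Finset.Subset.antisymm
    · intro y hy
      obtain ⟨hyB, hyC⟩ := Finset.mem_inter.1 hy
      obtain ⟨s, hs, hse⟩ := Finset.mem_image.1 hyB
      obtain ⟨j, -, hje⟩ := Finset.mem_image.1 hyC
      have hsx : s ≤ x := F.le_max' s hs
      have htj : t j ≤ t j0 := hj0 j (mem_univ _)
      have h1 : y ≤ x - t j0 := hse ▸ sub_le_sub_right hsx _
      have h2 : x - t j0 ≤ y := hje ▸ sub_le_sub_left htj _
      simp [le_antisymm h1 h2]
    · intro y hy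
      rw [Finset.mem_singleton] at hy
      subst hy
      exact Finset.mem_inter.2 ⟨Finset.mem_image_of_mem _ (F.max'_mem hFne),
        Finset.mem_image_of_mem _ (mem_univ j0)⟩
  have hkey : F.card + ℓ ≤ A.card + 1 := by
    have h1 : (B ∪ C).card + (B ∩ C).card = B.card + C.card :=
      Finset.card_union_add_card_inter B C
    have h2 : (B ∪ C).card ≤ A.card := Finset.card_le_card (Finset.union_subset hBA hCA)
    rw [hInter, Finset.card_singleton] at h1
    omega
  have hTcard : T.ncard = F.card := Set.ncard_eq_toFinset_card T hTfin
  omega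

/-- For a finite set `A ⊆ ℝ^d` with at least two points, and distinct translation
vectors `t 1, …, t ℓ` with `1 ≤ ℓ ≤ #A + 1`, the intersection of the translates
`A + t j` has at most `#A + 1 - ℓ` points. -/
theorem stmt0 (d : ℕ) (A : Finset (EuclideanSpace ℝ (Fin d))) (hA : 2 ≤ A.card)
    (ℓ : ℕ) (hℓ : 1 ≤ ℓ) (hℓ' : ℓ ≤ A.card + 1)
    (t : Fin ℓ → EuclideanSpace ℝ (Fin d)) (ht : Function.Injective t) :
    (⋂ j : Fin ℓ, (fun a => a + t j) '' (A : Set (EuclideanSpace ℝ (Fin d)))).ncard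
      ≤ A.card + 1 - ℓ := by
  classical
  let e : EuclideanSpace ℝ (Fin d) ≃+ Lex (Fin d → ℝ) :=
    { toFun := fun x => toLex (WithLp.equiv 2 (Fin d → ℝ) x)
      invFun := fun x => (WithLp.equiv 2 (Fin d → ℝ)).symm (ofLex x)
      left_inv := fun _ => rfl
      right_inv := fun _ => rfl
      map_add' := fun _ _ => rfl }
  have he : Function.Injective e := e.injective
  have himg : e '' (⋂ j : Fin ℓ, (fun a => a + t j) '' (A : Set (EuclideanSpace ℝ (Fin d))))
      = ⋂ j : Fin ℓ, (fun a => a + e (t j)) '' ((A.image e : Finset (Lex (Fin d → ℝ))) : Set _) := by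
    rw [Set.image_iInter e.bijective]
    refine Set.iInter_congr fun j => ?_
    rw [← Set.image_comp, Finset.coe_image, ← Set.image_comp]
    refine congrFun (congrArg _ ?_) _
    funext a
    simp [Function.comp, map_add]
  rw [← Set.ncard_image_of_injective _ he, himg]
  have h2 := key_translate_lemma (A.image e) hℓ (fun j => e (t j))
    (fun a b hab => ht (he hab))
  rwa [Finset.card_image_of_injective _ he] at h2
end

section
/- Let K ⊂ ℝ^d be the homogeneous self-similar set generated by {f_b(x) = ρOx + b : b ∈ D}, and suppose the IFS {g_b(x) = ρOx + b : b ∈ D − D} satisfies the strong separation condition. Then for every t ∈ K − K there exists a unique sequence (t_k) ∈ (D − D)^ℕ such that t = Σ_{k=1}^∞ (ρO)^{k−1} t_k, and moreover K ∩ (K + t) = {Σ_{k=1}^∞ (ρO)^{k−1} b_k : b_k ∈ D ∩ (D + t_k) for all k ≥ 1}. -/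
open Pointwise

/-- Let `K = {∑ₖ (ρO)^k bₖ : bₖ ∈ D}` be the homogeneous self-similar set of
`{x ↦ A x + b : b ∈ D}` (`A = ρO`). If the difference IFS
`{x ↦ A x + t : t ∈ D − D}` satisfies the strong separation condition on its
attractor `K − K`, then every `t ∈ K − K` has a unique coding `(tₖ) ∈ (D − D)^ℕ`
with `t = ∑ₖ A^k tₖ`, and for such a coding,
`K ∩ (K + t) = {∑ₖ A^k bₖ : bₖ ∈ D ∩ (D + tₖ)}`. -/
theorem stmt5 (d : ℕ) (ρ : ℝ) (hρ0 : 0 < ρ) (hρ1 : ρ < 1)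
    (A : EuclideanSpace ℝ (Fin d) →L[ℝ] EuclideanSpace ℝ (Fin d))
    (hA : ∀ x, ‖A x‖ = ρ * ‖x‖)
    (D : Finset (EuclideanSpace ℝ (Fin d))) (hD : 2 ≤ D.card)
    (K : Set (EuclideanSpace ℝ (Fin d)))
    (hK : K = {x | ∃ b : ℕ → EuclideanSpace ℝ (Fin d),
      (∀ k, b k ∈ D) ∧ x = ∑' k : ℕ, (A ^ k) (b k)})
    (hSSC : ∀ t ∈ (D : Set (EuclideanSpace ℝ (Fin d))) - (D : Set (EuclideanSpace ℝ (Fin d))),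
      ∀ t' ∈ (D : Set (EuclideanSpace ℝ (Fin d))) - (D : Set (EuclideanSpace ℝ (Fin d))),
      t ≠ t' → Disjoint ((fun x => A x + t) '' (K - K)) ((fun x => A x + t') '' (K - K))) :
    (∀ t ∈ K - K, ∃! tk : ℕ → EuclideanSpace ℝ (Fin d),
        (∀ k, tk k ∈ (D : Set (EuclideanSpace ℝ (Fin d))) - (D : Set (EuclideanSpace ℝ (Fin d)))) ∧
        t = ∑' k : ℕ, (A ^ k) (tk k)) ∧
    (∀ t : EuclideanSpace ℝ (Fin d), ∀ tk : ℕ → EuclideanSpace ℝ (Fin d),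
      (∀ k, tk k ∈ (D : Set (EuclideanSpace ℝ (Fin d))) - (D : Set (EuclideanSpace ℝ (Fin d)))) →
      t = ∑' k : ℕ, (A ^ k) (tk k) →
      K ∩ ((fun x => x + t) '' K) =
        {x | ∃ b : ℕ → EuclideanSpace ℝ (Fin d),
          (∀ k, b k ∈ (D : Set (EuclideanSpace ℝ (Fin d))) ∩
            ((fun a => a + tk k) '' (D : Set (EuclideanSpace ℝ (Fin d))))) ∧
          x = ∑' k : ℕ, (A ^ k) (b k)}) := by
  classical
  have hAn : ∀ (k : ℕ) (x : EuclideanSpace ℝ (Fin d)), ‖(A ^ k) x‖ = ρ ^ k * ‖x‖ := by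
    intro k
    induction k with
    | zero => intro x; simp
    | succ n ih =>
      intro x
      rw [pow_succ, ContinuousLinearMap.mul_apply, ih, hA, pow_succ]
      ring
  have hAinj : Function.Injective A := by
    intro x y h
    have h0 : ρ * ‖x - y‖ = 0 := by rw [← hA, map_sub, h, sub_self, norm_zero]
    have h1 : ‖x - y‖ = 0 := by
      rcases mul_eq_zero.mp h0 with h | h
      · exact absurd h hρ0.ne'
      · exact h
    exact sub_eq_zero.mp (norm_eq_zero.mp h1)
  obtain ⟨M, hM⟩ : ∃ M : ℝ, ∀ b ∈ (D : Set (EuclideanSpace ℝ (Fin d))), ‖b‖ ≤ M := by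
    obtain ⟨M, hM⟩ := (D.image fun b => ‖b‖).exists_le
    exact ⟨M, fun b hb => hM _ (Finset.mem_image_of_mem _ hb)⟩
  have hs : ∀ (u : ℕ → EuclideanSpace ℝ (Fin d)), (∃ C, ∀ k, ‖u k‖ ≤ C) →
      Summable fun k => (A ^ k) (u k) := by
    rintro u ⟨C, hC⟩
    apply Summable.of_norm_bounded (g := fun k => C * ρ ^ k)
      ((summable_geometric_of_lt_one hρ0.le hρ1).mul_left C)
    intro k
    rw [hAn]
    calc ρ ^ k * ‖u k‖ ≤ ρ ^ k * C :=
          mul_le_mul_of_nonneg_left (hC k) (pow_nonneg hρ0.le k)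
      _ = C * ρ ^ k := mul_comm _ _
  have hsD : ∀ (u : ℕ → EuclideanSpace ℝ (Fin d)),
      (∀ k, u k ∈ (D : Set (EuclideanSpace ℝ (Fin d)))) → Summable fun k => (A ^ k) (u k) :=
    fun u hu => hs u ⟨M, fun k => hM _ (hu k)⟩
  have hsDD : ∀ (u : ℕ → EuclideanSpace ℝ (Fin d)),
      (∀ k, u k ∈ (D : Set (EuclideanSpace ℝ (Fin d))) - (D : Set (EuclideanSpace ℝ (Fin d)))) →
      Summable fun k => (A ^ k) (u k) := by
    intro u hu
    refine hs u ⟨M + M, fun k => ?_⟩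
    obtain ⟨p, hp, q, hq, hpq⟩ := hu k
    have : u k = p - q := hpq.symm
    rw [this]
    exact (norm_sub_le _ _).trans (add_le_add (hM _ hp) (hM _ hq))
  have hshift : ∀ (u : ℕ → EuclideanSpace ℝ (Fin d)), (Summable fun k => (A ^ k) (u k)) →
      (Summable fun k => (A ^ k) (u (k + 1))) →
      (∑' k : ℕ, (A ^ k) (u k)) = u 0 + A (∑' k : ℕ, (A ^ k) (u (k + 1))) := by
    intro u h1 h2
    rw [Summable.tsum_eq_zero_add h1, A.map_tsum h2, pow_zero, ContinuousLinearMap.one_apply]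
    congr 1
    exact tsum_congr fun k => by rw [pow_succ', ContinuousLinearMap.mul_apply]
  have hdiff : ∀ (b c : ℕ → EuclideanSpace ℝ (Fin d)),
      (∀ k, b k ∈ (D : Set (EuclideanSpace ℝ (Fin d)))) →
      (∀ k, c k ∈ (D : Set (EuclideanSpace ℝ (Fin d)))) →
      (∑' k : ℕ, (A ^ k) (b k - c k)) =
        (∑' k : ℕ, (A ^ k) (b k)) - ∑' k : ℕ, (A ^ k) (c k) := by
    intro b c hb hc
    have he : (fun k => (A ^ k) (b k - c k)) = fun k => (A ^ k) (b k) - (A ^ k) (c k) :=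
      funext fun k => map_sub _ _ _
    rw [he, Summable.tsum_sub (hsD b hb) (hsD c hc)]
  have hmemKK : ∀ (u : ℕ → EuclideanSpace ℝ (Fin d)),
      (∀ k, u k ∈ (D : Set (EuclideanSpace ℝ (Fin d))) - (D : Set (EuclideanSpace ℝ (Fin d)))) →
      (∑' k : ℕ, (A ^ k) (u k)) ∈ K - K := by
    intro u hu
    choose p hp q hq hpq using hu
    have he : (∑' k : ℕ, (A ^ k) (u k)) =
        (∑' k : ℕ, (A ^ k) (p k)) - ∑' k : ℕ, (A ^ k) (q k) := by
      rw [← hdiff p q hp hq]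
      exact tsum_congr fun k => congrArg _ (hpq k).symm
    rw [he]
    exact Set.sub_mem_sub (by rw [hK]; exact ⟨p, fun k => hp k, rfl⟩)
      (by rw [hK]; exact ⟨q, fun k => hq k, rfl⟩)
  have head : ∀ (u v : ℕ → EuclideanSpace ℝ (Fin d)),
      (∀ k, u k ∈ (D : Set (EuclideanSpace ℝ (Fin d))) - (D : Set (EuclideanSpace ℝ (Fin d)))) →
      (∀ k, v k ∈ (D : Set (EuclideanSpace ℝ (Fin d))) - (D : Set (EuclideanSpace ℝ (Fin d)))) →
      (∑' k : ℕ, (A ^ k) (u k)) = (∑' k : ℕ, (A ^ k) (v k)) → u 0 = v 0 := by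
    intro u v hu hv hsum
    by_contra hne
    have hds := hSSC (u 0) (hu 0) (v 0) (hv 0) hne
    have hu' : Summable fun k => (A ^ k) (u (k + 1)) := hsDD _ (fun k => hu (k + 1))
    have hv' : Summable fun k => (A ^ k) (v (k + 1)) := hsDD _ (fun k => hv (k + 1))
    have e1 := hshift u (hsDD u hu) hu'
    have e2 := hshift v (hsDD v hv) hv'
    have m1 : (∑' k : ℕ, (A ^ k) (u k)) ∈ (fun x => A x + u 0) '' (K - K) :=
      ⟨_, hmemKK _ (fun k => hu (k + 1)), by rw [e1]; exact (add_comm _ _)⟩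
    have m2 : (∑' k : ℕ, (A ^ k) (u k)) ∈ (fun x => A x + v 0) '' (K - K) :=
      ⟨_, hmemKK _ (fun k => hv (k + 1)), by rw [hsum, e2]; exact (add_comm _ _)⟩
    exact Set.disjoint_left.mp hds m1 m2
  have key : ∀ (n : ℕ) (u v : ℕ → EuclideanSpace ℝ (Fin d)),
      (∀ k, u k ∈ (D : Set (EuclideanSpace ℝ (Fin d))) - (D : Set (EuclideanSpace ℝ (Fin d)))) →
      (∀ k, v k ∈ (D : Set (EuclideanSpace ℝ (Fin d))) - (D : Set (EuclideanSpace ℝ (Fin d)))) →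
      (∑' k : ℕ, (A ^ k) (u k)) = (∑' k : ℕ, (A ^ k) (v k)) → u n = v n := by
    intro n
    induction n with
    | zero => exact head
    | succ n ih =>
      intro u v hu hv hsum
      have h0 : u 0 = v 0 := head u v hu hv hsum
      have hu' : Summable fun k => (A ^ k) (u (k + 1)) := hsDD _ (fun k => hu (k + 1))
      have hv' : Summable fun k => (A ^ k) (v (k + 1)) := hsDD _ (fun k => hv (k + 1))
      have e1 := hshift u (hsDD u hu) hu'
      have e2 := hshift v (hsDD v hv) hv'
      have htail : (∑' k : ℕ, (A ^ k) (u (k + 1))) = ∑' k : ℕ, (A ^ k) (v (k + 1)) := by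
        apply hAinj
        have h3 := hsum
        rw [e1, e2, h0] at h3
        exact add_left_cancel h3
      exact ih (fun k => u (k + 1)) (fun k => v (k + 1))
        (fun k => hu (k + 1)) (fun k => hv (k + 1)) htail
  constructor
  · intro t ht
    obtain ⟨x, hx, y, hy, hxy⟩ := ht
    rw [hK] at hx hy
    obtain ⟨b, hb, rfl⟩ := hx
    obtain ⟨c, hc, rfl⟩ := hy
    have hxy' : (∑' k : ℕ, (A ^ k) (b k)) - (∑' k : ℕ, (A ^ k) (c k)) = t := hxy
    refine ⟨fun k => b k - c k, ⟨fun k => Set.sub_mem_sub (hb k) (hc k), ?_⟩, ?_⟩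
    · rw [hdiff b c (fun k => hb k) (fun k => hc k), hxy']
    · rintro tk' ⟨h1, h2⟩
      funext n
      refine key n tk' (fun k => b k - c k) h1 (fun k => Set.sub_mem_sub (hb k) (hc k)) ?_
      rw [← h2, hdiff b c (fun k => hb k) (fun k => hc k), hxy']
  · intro t tk htk hsum
    ext x
    constructor
    · rintro ⟨hxK, y, hyK, rfl⟩
      rw [hK] at hxK hyK
      obtain ⟨c, hc, hyc⟩ := hyK
      obtain ⟨b, hb, hxb⟩ := hxK
      have hxb' : y + t = ∑' k : ℕ, (A ^ k) (b k) := hxb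
      have hukey : ∀ n, b n - c n = tk n := by
        intro n
        refine key n (fun k => b k - c k) tk
          (fun k => Set.sub_mem_sub (hb k) (hc k)) htk ?_
        rw [hdiff b c (fun k => hb k) (fun k => hc k), ← hxb', ← hyc, ← hsum,
          add_sub_cancel_left]
      refine ⟨b, fun k => ⟨hb k, c k, hc k, ?_⟩, hxb⟩
      show c k + tk k = b k
      rw [← hukey k, add_comm]
      exact sub_add_cancel _ _
    · rintro ⟨b, hb, rfl⟩
      have hbD : ∀ k, b k ∈ (D : Set (EuclideanSpace ℝ (Fin d))) := fun k => (hb k).1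
      choose c hc hcb using fun k => (hb k).2
      have hmain : (∑' k : ℕ, (A ^ k) (c k)) + (∑' k : ℕ, (A ^ k) (tk k)) =
          ∑' k : ℕ, (A ^ k) (b k) := by
        rw [← Summable.tsum_add (hsD c hc) (hsDD tk htk)]
        exact tsum_congr fun k => by
          rw [← map_add]; exact congrArg _ (hcb k)
      refine ⟨by rw [hK]; exact ⟨b, fun k => hbD k, rfl⟩,
        ∑' k : ℕ, (A ^ k) (c k), by rw [hK]; exact ⟨c, fun k => hc k, rfl⟩, ?_⟩
      show (∑' k : ℕ, (A ^ k) (c k)) + t = ∑' k : ℕ, (A ^ k) (b k)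
      rw [hsum]
      exact hmain
end

section
/- Let S ⊂ ℕ with β := limsup_{n→∞} #(S ∩ [1,n])/n > 0. Then for any integer ℓ ≥ 2, S can be partitioned into pairwise disjoint subsets S₁, S₂, …, S_ℓ such that limsup_{n→∞} #(S_j ∩ [1,n])/n = β for every 1 ≤ j ≤ ℓ. -/
open Filter


private lemma ncard_inter_Iio_le (A : Set ℕ) (n : ℕ) : (A ∩ Set.Iio n).ncard ≤ n := by
  calc (A ∩ Set.Iio n).ncard ≤ (Set.Iio n).ncard :=
        Set.ncard_le_ncard Set.inter_subset_right (Set.finite_Iio n)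
    _ = n := by simp [Set.ncard_eq_toFinset_card']

/-- **Lemma 3.2.** If `S ⊆ ℕ` has upper density `β = limsup_n #(S ∩ [0,n)) / n > 0`,
then for every `ℓ ≥ 2`, `S` can be partitioned into pairwise disjoint subsets
`S₁, …, S_ℓ`, each of upper density `β`. -/
theorem stmt8 (S : Set ℕ) (β : ℝ)
    (hβ : Filter.limsup (fun n : ℕ => ((S ∩ Set.Iio n).ncard : ℝ) / n) Filter.atTop = β)
    (hβpos : 0 < β) :
    ∀ ℓ : ℕ, 2 ≤ ℓ → ∃ T : Fin ℓ → Set ℕ,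
      Pairwise (Function.onFun Disjoint T) ∧
      (⋃ j, T j) = S ∧
      ∀ j, Filter.limsup (fun n : ℕ => ((T j ∩ Set.Iio n).ncard : ℝ) / n) Filter.atTop = β := by
  intro ℓ hℓ
  classical
  set d : ℕ → ℝ := fun n : ℕ => ((S ∩ Set.Iio n).ncard : ℝ) / n with hd
  have hd0 : ∀ n, 0 ≤ d n := fun n => div_nonneg (Nat.cast_nonneg _) (Nat.cast_nonneg _)
  have hd1 : ∀ n, d n ≤ 1 := by
    intro n
    rcases Nat.eq_zero_or_pos n with h | h
    · simp [hd, h]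
    · rw [hd, div_le_one (by exact_mod_cast h)]
      exact_mod_cast ncard_inter_Iio_le S n
  have hdbdd : IsBoundedUnder (· ≤ ·) atTop d := isBoundedUnder_of ⟨1, fun n => hd1 n⟩
  have hdcobdd : IsCoboundedUnder (· ≤ ·) atTop d :=
    IsBoundedUnder.isCoboundedUnder_le (isBoundedUnder_of ⟨0, fun n => hd0 n⟩)
  -- frequently close to β
  have hfreq : ∀ ε : ℝ, 0 < ε → ∀ M : ℕ, ∃ m, M ≤ m ∧ β - ε < d m := by
    intro ε hε M
    have h := Filter.frequently_lt_of_lt_limsup hdcobdd (b := β - ε) (by rw [hβ]; linarith)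
    rcases (frequently_atTop.mp h) M with ⟨m, hm1, hm2⟩
    exact ⟨m, hm1, hm2⟩
  -- the rapidly increasing sequence
  have Hstep : ∀ k : ℕ, ∀ p : ℕ, ∃ m, (k+1) * (p+1) ≤ m ∧ β - 1/(k+1) < d m := by
    intro k p
    exact hfreq (1/(k+1)) (by positivity) _
  let nseq : ℕ → ℕ := fun k => Nat.rec (motive := fun _ => ℕ) 0
    (fun k prev => (Hstep k prev).choose) k
  have hnseq0 : nseq 0 = 0 := rfl
  have hnseqS : ∀ k, (k+1) * (nseq k + 1) ≤ nseq (k+1) ∧ β - 1/(k+1) < d (nseq (k+1)) :=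
    fun k => (Hstep k (nseq k)).choose_spec
  have hnseq_ge : ∀ k, k ≤ nseq k := by
    intro k
    cases k with
    | zero => simp [hnseq0]
    | succ k =>
      have := (hnseqS k).1
      nlinarith [Nat.zero_le (nseq k)]
  have hnseq_mono : StrictMono nseq := by
    apply strictMono_nat_of_lt_succ
    intro k
    have := (hnseqS k).1
    nlinarith [Nat.zero_le (nseq k)]
  -- block index
  let g : ℕ → ℕ := fun m => Nat.findGreatest (fun k => nseq k ≤ m) m
  have hg1 : ∀ m, nseq (g m) ≤ m := by
    intro m
    exact Nat.findGreatest_spec (P := fun k => nseq k ≤ m) (Nat.zero_le m) (Nat.zero_le m)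
  have hg2 : ∀ m, m < nseq (g m + 1) := by
    intro m
    by_contra h
    push_neg at h
    have h1 : g m + 1 ≤ m := le_trans (hnseq_ge _) h
    have h2 : g m + 1 ≤ g m :=
      Nat.le_findGreatest (P := fun k => nseq k ≤ m) h1 h
    omega
  have hg_eq : ∀ k m, nseq k ≤ m → m < nseq (k+1) → g m = k := by
    intro k m h1 h2
    have hk : k ≤ g m := Nat.le_findGreatest (P := fun k => nseq k ≤ m)
      (le_trans (hnseq_ge k) h1) h1
    have : g m < k + 1 := by
      by_contra h
      push_neg at h
      exact absurd (le_trans (hnseq_mono.le_iff_le.mpr h) (hg1 m)) (not_le.mpr h2)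
    omega
  have hℓpos : 0 < ℓ := by omega
  -- the partition
  refine ⟨fun j => {m | m ∈ S ∧ g m % ℓ = (j : ℕ)}, ?_, ?_, ?_⟩
  · intro j j' hjj'
    rw [Function.onFun, Set.disjoint_left]
    rintro m ⟨-, h1⟩ ⟨-, h2⟩
    exact hjj' (Fin.ext (h1.symm.trans h2))
  · ext m
    simp only [Set.mem_iUnion]
    constructor
    · rintro ⟨j, hm, -⟩; exact hm
    · intro hm
      exact ⟨⟨g m % ℓ, Nat.mod_lt _ hℓpos⟩, hm, rfl⟩
  · intro j
    set T : Set ℕ := {m | m ∈ S ∧ g m % ℓ = (j : ℕ)} with hT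
    set e : ℕ → ℝ := fun n : ℕ => ((T ∩ Set.Iio n).ncard : ℝ) / n with he
    have hTsub : T ⊆ S := fun m hm => hm.1
    have hle : ∀ n, e n ≤ d n := by
      intro n
      rcases Nat.eq_zero_or_pos n with h | h
      · simp [he, hd, h]
      · show ((T ∩ Set.Iio n).ncard : ℝ)/n ≤ ((S ∩ Set.Iio n).ncard : ℝ)/n
        rw [div_le_div_iff_of_pos_right (by exact_mod_cast h : (0:ℝ) < (n:ℝ))]
        exact_mod_cast Set.ncard_le_ncard (Set.inter_subset_inter_left _ hTsub)
          ((Set.finite_Iio n).inter_of_right _)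
    have hebdd : IsBoundedUnder (· ≤ ·) atTop e :=
      isBoundedUnder_of ⟨1, fun n => le_trans (hle n) (hd1 n)⟩
    have hlimsup_le : limsup e atTop ≤ β := by
      rw [← hβ]
      exact Filter.limsup_le_limsup (Eventually.of_forall hle)
        (IsBoundedUnder.isCoboundedUnder_le (isBoundedUnder_of
          ⟨0, fun n => div_nonneg (Nat.cast_nonneg _) (Nat.cast_nonneg _)⟩)) hdbdd
    -- key estimate
    have hkey : ∀ k : ℕ, k % ℓ = (j : ℕ) → β - 2/(k+1) ≤ e (nseq (k+1)) := by
      intro k hk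
      set N := nseq (k+1) with hN
      have hNpos : 0 < N := lt_of_lt_of_le (Nat.succ_pos k) (hnseq_ge _)
      have hsub : S ∩ Set.Ico (nseq k) N ⊆ T ∩ Set.Iio N := by
        rintro m ⟨hmS, hm1, hm2⟩
        exact ⟨⟨hmS, by rw [hg_eq k m hm1 hm2, hk]⟩, hm2⟩
      have hcount : (S ∩ Set.Iio N).ncard ≤ (T ∩ Set.Iio N).ncard + nseq k := by
        have h1 : S ∩ Set.Iio N ⊆ (S ∩ Set.Ico (nseq k) N) ∪ (Set.Iio (nseq k)) := by
          rintro m ⟨hmS, hm⟩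
          rcases lt_or_ge m (nseq k) with h | h
          · exact Or.inr h
          · exact Or.inl ⟨hmS, h, hm⟩
        have h2 : (S ∩ Set.Ico (nseq k) N).ncard ≤ (T ∩ Set.Iio N).ncard :=
          Set.ncard_le_ncard hsub ((Set.finite_Iio _).inter_of_right _)
        have h3 : (Set.Iio (nseq k)).ncard = nseq k := by simp [Set.ncard_eq_toFinset_card']
        calc (S ∩ Set.Iio N).ncard
            ≤ ((S ∩ Set.Ico (nseq k) N) ∪ (Set.Iio (nseq k))).ncard :=
              Set.ncard_le_ncard h1 (Set.Finite.union
                (((Set.finite_Iio _).inter_of_right _).subset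
                  (fun m hm => ⟨hm.1, hm.2.2⟩)) (Set.finite_Iio _))
          _ ≤ (S ∩ Set.Ico (nseq k) N).ncard + (Set.Iio (nseq k)).ncard :=
              Set.ncard_union_le _ _
          _ ≤ (T ∩ Set.Iio N).ncard + nseq k := by omega
      -- real arithmetic
      have hNk : ((k:ℝ)+1) * ((nseq k : ℝ) + 1) ≤ (N : ℝ) := by exact_mod_cast (hnseqS k).1
      have hNR : (0:ℝ) < (N : ℝ) := by exact_mod_cast hNpos
      have hfrac : (nseq k : ℝ) / N ≤ 1/((k:ℝ)+1) := by
        rw [div_le_div_iff₀ hNR (by positivity)]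
        nlinarith [Nat.cast_nonneg (α := ℝ) (nseq k)]
      have hdN : β - 1/((k:ℝ)+1) < ((S ∩ Set.Iio N).ncard : ℝ) / N := (hnseqS k).2
      have hcountR : ((S ∩ Set.Iio N).ncard : ℝ) ≤ ((T ∩ Set.Iio N).ncard : ℝ) + nseq k := by
        exact_mod_cast hcount
      have h6 : ((S ∩ Set.Iio N).ncard : ℝ)/N ≤ ((T ∩ Set.Iio N).ncard : ℝ)/N + (nseq k : ℝ)/N := by
        rw [← add_div]
        gcongr
      show β - 2/((k:ℝ)+1) ≤ ((T ∩ Set.Iio N).ncard : ℝ) / N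
      have h7 : 2/((k:ℝ)+1) = 1/((k:ℝ)+1) + 1/((k:ℝ)+1) := by ring
      linarith
    -- limsup ≥ β
    have hlimsup_ge : β ≤ limsup e atTop := by
      by_contra h
      push_neg at h
      set L := limsup e atTop with hL
      have hc : L < (L+β)/2 := by linarith
      have hev := eventually_lt_of_limsup_lt hc hebdd
      rw [eventually_atTop] at hev
      obtain ⟨K, hK⟩ := hev
      have hε : 0 < (β - L)/2 := by linarith
      obtain ⟨M, hM⟩ := exists_nat_gt (2/((β - L)/2))
      set k := (j : ℕ) + ℓ * (M + K + 1) with hk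
      have hkmod : k % ℓ = (j : ℕ) := by
        rw [hk, Nat.add_mul_mod_self_left]
        exact Nat.mod_eq_of_lt j.isLt
      have hmul : M + K + 1 ≤ ℓ * (M + K + 1) := Nat.le_mul_of_pos_left _ hℓpos
      have hkM : M ≤ k := by omega
      have hkK : K ≤ k := by omega
      have hNK : K ≤ nseq (k+1) := le_trans (by omega) (hnseq_ge (k+1))
      have hsmall : 2/((k:ℝ)+1) < (β - L)/2 := by
        rw [div_lt_iff₀ (by positivity)]
        rw [div_lt_iff₀ hε] at hM
        have hMk : (M:ℝ) ≤ (k:ℝ) := by exact_mod_cast hkM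
        nlinarith
      have h1 := hkey k hkmod
      have h2 := hK (nseq (k+1)) hNK
      linarith
    linarith
end

section
/- Every self-similar set in ℝ^d containing at least two points has positive Hausdorff dimension. -/
open Set Metric Filter Topology
open scoped NNReal ENNReal

private noncomputable def iterMap {E : Type*} (g h : E → E) (ω : ℕ → Bool) : ℕ → E → E
  | 0 => id
  | n+1 => (iterMap g h ω n) ∘ (if ω n then g else h)

private noncomputable def bexp (ω : ℕ → Bool) : ℝ :=
  ∑' n : ℕ, (if ω n then ((2:ℝ)⁻¹)^(n+1) else 0)

private theorem geom_summable : Summable (fun n : ℕ => ((2:ℝ)⁻¹)^(n+1)) :=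
  ((summable_geometric_of_lt_one (by norm_num) (by norm_num : (2:ℝ)⁻¹ < 1)).mul_left
    ((2:ℝ)⁻¹)).congr (fun n => by ring)

private theorem bexp_term_bound (ω : ℕ → Bool) (n : ℕ) :
    |if ω n then ((2:ℝ)⁻¹)^(n+1) else 0| ≤ ((2:ℝ)⁻¹)^(n+1) := by
  split
  · rw [abs_of_nonneg (by positivity)]
  · simp only [abs_zero]; positivity

private theorem bexp_summable (ω : ℕ → Bool) :
    Summable (fun n : ℕ => (if ω n then ((2:ℝ)⁻¹)^(n+1) else 0)) := by
  apply Summable.of_abs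
  exact Summable.of_nonneg_of_le (fun n => abs_nonneg _) (bexp_term_bound ω) geom_summable

private theorem geom_tail (n : ℕ) :
    ∑' k : ℕ, ((2:ℝ)⁻¹)^(k + n + 1) = ((2:ℝ)⁻¹)^n := by
  have h : ∀ k : ℕ, ((2:ℝ)⁻¹)^(k + n + 1) = ((2:ℝ)⁻¹)^(n+1) * ((2:ℝ)⁻¹)^k := by
    intro k; ring
  rw [tsum_congr h, tsum_mul_left,
    tsum_geometric_of_lt_one (by norm_num) (by norm_num : (2:ℝ)⁻¹ < 1)]
  have h2 : ((1:ℝ) - 2⁻¹)⁻¹ = 2 := by norm_num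
  rw [h2]; ring

/-- tail bound: if two sequences agree below `n`, their bexp values differ by ≤ 2⁻ⁿ. -/
private theorem bexp_close {ω ω' : ℕ → Bool} {n : ℕ} (hag : ∀ k < n, ω k = ω' k) :
    |bexp ω - bexp ω'| ≤ ((2:ℝ)⁻¹)^n := by
  have hs := bexp_summable ω
  have hs' := bexp_summable ω'
  have hsub : bexp ω - bexp ω'
      = ∑' k : ℕ, ((if ω k then ((2:ℝ)⁻¹)^(k+1) else 0) - (if ω' k then ((2:ℝ)⁻¹)^(k+1) else 0)) :=
    by unfold bexp; exact (Summable.tsum_sub hs hs').symm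
  set f : ℕ → ℝ :=
    fun k => (if ω k then ((2:ℝ)⁻¹)^(k+1) else 0) - (if ω' k then ((2:ℝ)⁻¹)^(k+1) else 0) with hf
  have hfs : Summable f := hs.sub hs'
  set u : ℕ → ℝ := fun k => if k < n then 0 else ((2:ℝ)⁻¹)^(k+1) with hu
  have hus : Summable u := by
    apply Summable.of_nonneg_of_le (fun k => ?_) (fun k => ?_) geom_summable
    · simp only [hu]; split
      · exact le_refl _
      · positivity
    · simp only [hu]; split
      · positivity
      · exact le_refl _
  have hb : ∀ k, |f k| ≤ u k := by
    intro k
    by_cases hk : k < n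
    · simp [hf, hu, hag k hk, hk]
    · simp only [hf, hu, hk, if_false]
      have h1 : |if ω k then ((2:ℝ)⁻¹)^(k+1) else 0| ≤ ((2:ℝ)⁻¹)^(k+1) := bexp_term_bound ω k
      have h2 : |if ω' k then ((2:ℝ)⁻¹)^(k+1) else 0| ≤ ((2:ℝ)⁻¹)^(k+1) := bexp_term_bound ω' k
      by_cases hw : ω k <;> by_cases hw' : ω' k <;>
        simp only [hw, hw', if_true, if_false, sub_zero, zero_sub, sub_self, abs_zero, abs_neg,
          if_pos, Bool.false_eq_true] <;>
      first
        | positivity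
        | rw [abs_of_nonneg (by positivity)]
  have husum : ∑' k, u k ≤ ((2:ℝ)⁻¹)^n := by
    have h0 : ∀ k < n, u k = 0 := by intro k hk; simp [hu, hk]
    have hsplit := (Summable.sum_add_tsum_nat_add (f := u) n hus).symm
    rw [Finset.sum_eq_zero (fun k hk => h0 k (Finset.mem_range.1 hk)), zero_add] at hsplit
    rw [hsplit]
    calc ∑' k, u (k + n) ≤ ∑' k : ℕ, ((2:ℝ)⁻¹)^(k + n + 1) := by
          have hsum1 : Summable (fun k => u (k + n)) := (summable_nat_add_iff (f := u) n).2 hus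
          have hsum2 : Summable (fun k : ℕ => ((2:ℝ)⁻¹)^(k + n + 1)) :=
            ((summable_geometric_of_lt_one (by norm_num) (by norm_num : (2:ℝ)⁻¹ < 1)).mul_left
              (((2:ℝ)⁻¹)^(n+1))).congr (fun k => by ring)
          apply Summable.tsum_le_tsum _ hsum1 hsum2
          intro k
          simp only [hu]
          split
          · positivity
          · exact le_refl _
      _ = ((2:ℝ)⁻¹)^n := geom_tail n
  calc |bexp ω - bexp ω'| = |∑' k, f k| := by rw [hsub]
    _ ≤ ∑' k, |f k| := by
        simpa only [Real.norm_eq_abs] using norm_tsum_le_tsum_norm (f := f) (by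
          simpa only [Real.norm_eq_abs] using hfs.abs)
    _ ≤ ∑' k, u k := Summable.tsum_le_tsum hb hfs.abs hus
    _ ≤ ((2:ℝ)⁻¹)^n := husum

private noncomputable def digitSeq (t : ℝ) : ℕ → ℝ
  | 0 => t
  | n+1 => if (2:ℝ)⁻¹ ≤ digitSeq t n then 2 * digitSeq t n - 1 else 2 * digitSeq t n

private theorem bexp_surj {t : ℝ} (h0 : 0 ≤ t) (h1 : t ≤ 1) : ∃ ω : ℕ → Bool, bexp ω = t := by
  classical
  set x := digitSeq t with hxdef
  set ω : ℕ → Bool := fun n => decide ((2:ℝ)⁻¹ ≤ x n) with hω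
  have hx : ∀ n, 0 ≤ x n ∧ x n ≤ 1 := by
    intro n; induction n with
    | zero => exact ⟨h0, h1⟩
    | succ n ih =>
      show 0 ≤ digitSeq t (n+1) ∧ digitSeq t (n+1) ≤ 1
      rw [digitSeq]
      split
      · rename_i hle
        rw [← hxdef] at hle ⊢
        constructor <;> linarith [ih.1, ih.2]
      · rename_i hlt
        rw [← hxdef] at hlt ⊢
        push_neg at hlt
        constructor <;> linarith [ih.1, ih.2]
  have key : ∀ n, t = (∑ k ∈ Finset.range n, (if ω k then ((2:ℝ)⁻¹)^(k+1) else 0))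
      + x n * ((2:ℝ)⁻¹)^n := by
    intro n; induction n with
    | zero =>
      simp only [Finset.range_zero, Finset.sum_empty, pow_zero, mul_one, zero_add]; rfl
    | succ n ih =>
      rw [Finset.sum_range_succ]
      have hx1 : x (n+1) = if (2:ℝ)⁻¹ ≤ x n then 2 * x n - 1 else 2 * x n := by
        rw [hxdef]; rw [digitSeq]
      by_cases hle : (2:ℝ)⁻¹ ≤ x n
      · have hωn : ω n = true := by simp [hω, hle]
        rw [hωn, if_pos rfl, hx1, if_pos hle]
        rw [ih]; ring
      · have hωn : ω n = false := by simp [hω, hle]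
        rw [hωn, hx1, if_neg hle]
        simp only [Bool.false_eq_true, if_false, add_zero]
        rw [ih]; ring
  have tail : ∀ n, |bexp ω - ∑ k ∈ Finset.range n, (if ω k then ((2:ℝ)⁻¹)^(k+1) else 0)|
      ≤ ((2:ℝ)⁻¹)^n := by
    intro n
    have hsplit := Summable.sum_add_tsum_nat_add (f := fun k => (if ω k then ((2:ℝ)⁻¹)^(k+1) else 0)) n
      (bexp_summable ω)
    have : bexp ω - ∑ k ∈ Finset.range n, (if ω k then ((2:ℝ)⁻¹)^(k+1) else 0)
        = ∑' k, (if ω (k+n) then ((2:ℝ)⁻¹)^(k+n+1) else 0) := by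
      unfold bexp; rw [← hsplit]; ring
    rw [this]
    have hsum1 : Summable (fun k => (if ω (k+n) then ((2:ℝ)⁻¹)^(k+n+1) else 0)) :=
      (summable_nat_add_iff (f := fun k => (if ω k then ((2:ℝ)⁻¹)^(k+1) else 0)) n).2
        (bexp_summable ω)
    have hsum2 : Summable (fun k : ℕ => ((2:ℝ)⁻¹)^(k + n + 1)) :=
      ((summable_geometric_of_lt_one (by norm_num) (by norm_num : (2:ℝ)⁻¹ < 1)).mul_left
        (((2:ℝ)⁻¹)^(n+1))).congr (fun k => by ring)
    calc |∑' k, (if ω (k+n) then ((2:ℝ)⁻¹)^(k+n+1) else 0)|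
        ≤ ∑' k, |if ω (k+n) then ((2:ℝ)⁻¹)^(k+n+1) else 0| := by
          simpa only [Real.norm_eq_abs] using norm_tsum_le_tsum_norm
            (f := fun k => (if ω (k+n) then ((2:ℝ)⁻¹)^(k+n+1) else 0)) (by
            simpa only [Real.norm_eq_abs] using hsum1.abs)
      _ ≤ ∑' k : ℕ, ((2:ℝ)⁻¹)^(k + n + 1) := by
          apply Summable.tsum_le_tsum _ hsum1.abs hsum2
          intro k
          exact bexp_term_bound ω (k+n)
      _ = ((2:ℝ)⁻¹)^n := geom_tail n
  refine ⟨ω, ?_⟩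
  have hbound : ∀ n : ℕ, |bexp ω - t| ≤ 2 * ((2:ℝ)⁻¹)^n := by
    intro n
    have h2 : |t - ∑ k ∈ Finset.range n, (if ω k then ((2:ℝ)⁻¹)^(k+1) else 0)|
        = x n * ((2:ℝ)⁻¹)^n := by
      have hdiff : t - (∑ k ∈ Finset.range n, (if ω k then ((2:ℝ)⁻¹)^(k+1) else 0))
          = x n * ((2:ℝ)⁻¹)^n := by
        rw [key n]; ring
      rw [hdiff, abs_of_nonneg (by have := (hx n).1; positivity)]
    have h3 : x n * ((2:ℝ)⁻¹)^n ≤ ((2:ℝ)⁻¹)^n := by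
      have := (hx n).2
      nlinarith [pow_nonneg (by norm_num : (0:ℝ) ≤ 2⁻¹) n]
    calc |bexp ω - t| ≤ |bexp ω - ∑ k ∈ Finset.range n, (if ω k then ((2:ℝ)⁻¹)^(k+1) else 0)|
          + |t - ∑ k ∈ Finset.range n, (if ω k then ((2:ℝ)⁻¹)^(k+1) else 0)| := by
            have := abs_sub_le (bexp ω)
              (∑ k ∈ Finset.range n, (if ω k then ((2:ℝ)⁻¹)^(k+1) else 0)) t
            rwa [abs_sub_comm (∑ k ∈ Finset.range n, (if ω k then ((2:ℝ)⁻¹)^(k+1) else 0)) t]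
              at this
      _ ≤ ((2:ℝ)⁻¹)^n + ((2:ℝ)⁻¹)^n := by
            rw [h2]; exact add_le_add (tail n) h3
      _ = 2 * ((2:ℝ)⁻¹)^n := by ring
  have htend : Tendsto (fun n : ℕ => 2 * ((2:ℝ)⁻¹)^n) atTop (𝓝 0) := by
    have := (tendsto_pow_atTop_nhds_zero_of_lt_one (by norm_num : (0:ℝ) ≤ 2⁻¹)
      (by norm_num : (2:ℝ)⁻¹ < 1)).const_mul (2:ℝ)
    simpa using this
  have : |bexp ω - t| ≤ 0 := ge_of_tendsto' htend hbound
  have := le_antisymm this (abs_nonneg _)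
  rwa [abs_eq_zero, sub_eq_zero] at this

private theorem aux_dimH_pos {E : Type*} [MetricSpace E] [CompleteSpace E]
    (K : Set E) (hKc : IsCompact K) (p : E) (hp : p ∈ K)
    (g h : E → E) (rg rh : ℝ)
    (hrg0 : 0 < rg) (hrg1 : rg < 1) (hrh0 : 0 < rh) (hrh1 : rh < 1)
    (hgd : ∀ x y, dist (g x) (g y) = rg * dist x y)
    (hhd : ∀ x y, dist (h x) (h y) = rh * dist x y)
    (hgK : g '' K ⊆ K) (hhK : h '' K ⊆ K)
    (ε : ℝ) (hε : 0 < ε)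
    (hsep : ∀ x ∈ g '' K, ∀ y ∈ h '' K, ε ≤ dist x y) :
    0 < dimH K := by
  classical
  set rmin : ℝ := min rg rh with hrmin
  set rmax : ℝ := max rg rh with hrmax
  have hrmin0 : 0 < rmin := lt_min hrg0 hrh0
  have hrmin1 : rmin < 1 := min_lt_of_left_lt hrg1
  have hrmax0 : 0 < rmax := lt_of_lt_of_le hrg0 (le_max_left _ _)
  have hrmax1 : rmax < 1 := max_lt hrg1 hrh1
  have hgc : Continuous g :=
    (LipschitzWith.of_dist_le_mul (K := ⟨rg, hrg0.le⟩)
      (fun x y => le_of_eq (hgd x y))).continuous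
  have hhc : Continuous h :=
    (LipschitzWith.of_dist_le_mul (K := ⟨rh, hrh0.le⟩)
      (fun x y => le_of_eq (hhd x y))).continuous
  set ratio : (ℕ → Bool) → ℕ → ℝ :=
    fun ω n => ∏ k ∈ Finset.range n, (if ω k then rg else rh) with hratio
  have sim : ∀ ω n x y,
      dist (iterMap g h ω n x) (iterMap g h ω n y) = ratio ω n * dist x y := by
    intro ω n
    induction n with
    | zero => intro x y; simp [iterMap, hratio]
    | succ n ih =>
      intro x y
      show dist (iterMap g h ω n ((if ω n then g else h) x))
          (iterMap g h ω n ((if ω n then g else h) y)) = _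
      rw [ih]
      have hr : ratio ω (n+1) = ratio ω n * (if ω n then rg else rh) := by
        simp only [hratio]; rw [Finset.prod_range_succ]
      rw [hr]
      by_cases hb : ω n
      · simp only [if_pos hb]; rw [hgd]; ring
      · simp only [if_neg hb]; rw [hhd]; ring
  have hratio_pos : ∀ ω n, 0 < ratio ω n := by
    intro ω n
    apply Finset.prod_pos
    intro k _; split <;> assumption
  have hratio_le : ∀ ω n, ratio ω n ≤ rmax ^ n := by
    intro ω n
    calc ratio ω n ≤ ∏ _k ∈ Finset.range n, rmax := by
          apply Finset.prod_le_prod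
          · intro k _; split <;> positivity
          · intro k _; split
            · exact le_max_left _ _
            · exact le_max_right _ _
      _ = rmax ^ n := by rw [Finset.prod_const, Finset.card_range]
  have hratio_ge : ∀ ω n, rmin ^ n ≤ ratio ω n := by
    intro ω n
    calc rmin ^ n = ∏ _k ∈ Finset.range n, rmin := by rw [Finset.prod_const, Finset.card_range]
      _ ≤ ratio ω n := by
          apply Finset.prod_le_prod
          · intro k _; exact hrmin0.le
          · intro k _; split
            · exact min_le_left _ _
            · exact min_le_right _ _
  have img : ∀ ω n, iterMap g h ω n '' K ⊆ K := by
    intro ω n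
    induction n with
    | zero => simp [iterMap]
    | succ n ih =>
      show (iterMap g h ω n ∘ (if ω n then g else h)) '' K ⊆ K
      rw [Set.image_comp]
      refine subset_trans (Set.image_mono ?_) ih
      split
      · exact hgK
      · exact hhK
  have imgmono : ∀ ω n m, n ≤ m → iterMap g h ω m '' K ⊆ iterMap g h ω n '' K := by
    intro ω n m hnm
    induction m, hnm using Nat.le_induction with
    | base => exact subset_refl _
    | succ m hnm ih =>
      refine subset_trans ?_ ih
      show (iterMap g h ω m ∘ (if ω m then g else h)) '' K ⊆ _
      rw [Set.image_comp]
      refine Set.image_mono ?_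
      split
      · exact hgK
      · exact hhK
  have cont : ∀ ω n, Continuous (iterMap g h ω n) := by
    intro ω n
    induction n with
    | zero => exact continuous_id
    | succ n ih =>
      show Continuous (iterMap g h ω n ∘ (if ω n then g else h))
      refine ih.comp ?_
      split
      · exact hgc
      · exact hhc
  set seq : (ℕ → Bool) → ℕ → E := fun ω n => iterMap g h ω n p with hseq
  have seqmem : ∀ ω n, seq ω n ∈ iterMap g h ω n '' K := fun ω n => ⟨p, hp, rfl⟩
  set D : ℝ := diam K with hD
  have hD0 : 0 ≤ D := diam_nonneg
  have cauchy : ∀ ω, CauchySeq (seq ω) := by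
    intro ω
    apply cauchySeq_of_le_geometric rmax D hrmax1
    intro n
    have h1 : seq ω (n+1) = iterMap g h ω n ((if ω n then g else h) p) := rfl
    have h2 : dist (seq ω n) (seq ω (n+1))
        = ratio ω n * dist p ((if ω n then g else h) p) := by
      rw [h1, hseq]; exact sim ω n p _
    rw [h2]
    have hfp : (if ω n then g else h) p ∈ K := by
      split
      · exact hgK ⟨p, hp, rfl⟩
      · exact hhK ⟨p, hp, rfl⟩
    have hdp : dist p ((if ω n then g else h) p) ≤ D :=
      dist_le_diam_of_mem hKc.isBounded hp hfp
    calc ratio ω n * dist p ((if ω n then g else h) p) ≤ rmax ^ n * D :=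
          mul_le_mul (hratio_le ω n) hdp dist_nonneg (by positivity)
      _ = D * rmax ^ n := by ring
  have hπex : ∀ ω, ∃ x, Tendsto (seq ω) atTop (𝓝 x) := fun ω =>
    cauchySeq_tendsto_of_complete (cauchy ω)
  choose π hπ using hπex
  have πmem : ∀ ω n, π ω ∈ iterMap g h ω n '' K := by
    intro ω n
    have hcl : IsClosed (iterMap g h ω n '' K) := (hKc.image (cont ω n)).isClosed
    apply hcl.mem_of_tendsto (hπ ω)
    filter_upwards [eventually_ge_atTop n] with m hm
    exact imgmono ω n m hm (seqmem ω m)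
  have πK : ∀ ω, π ω ∈ K := by
    intro ω
    have := πmem ω 0
    simpa [iterMap] using this
  have agree : ∀ ω ω' n, (∀ k < n, ω k = ω' k) → iterMap g h ω n = iterMap g h ω' n := by
    intro ω ω' n hag
    induction n with
    | zero => rfl
    | succ n ih =>
      show iterMap g h ω n ∘ (if ω n then g else h)
          = iterMap g h ω' n ∘ (if ω' n then g else h)
      rw [ih (fun k hk => hag k (hk.trans (Nat.lt_succ_self n))),
        hag n (Nat.lt_succ_self n)]
  have sep : ∀ ω ω' n, (∀ k < n, ω k = ω' k) → ω n = true → ω' n = false →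
      rmin ^ n * ε ≤ dist (π ω) (π ω') := by
    intro ω ω' n hag hn hn'
    have h1 : π ω ∈ iterMap g h ω n '' (g '' K) := by
      have hme := πmem ω (n+1)
      have : iterMap g h ω (n+1) = iterMap g h ω n ∘ g := by
        show iterMap g h ω n ∘ (if ω n then g else h) = _
        rw [hn]; rfl
      rwa [this, Set.image_comp] at hme
    have h2 : π ω' ∈ iterMap g h ω n '' (h '' K) := by
      have hme := πmem ω' (n+1)
      have he : iterMap g h ω' (n+1) = iterMap g h ω n ∘ h := by
        show iterMap g h ω' n ∘ (if ω' n then g else h) = _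
        rw [hn', agree ω' ω n (fun k hk => (hag k hk).symm)]; rfl
      rwa [he, Set.image_comp] at hme
    obtain ⟨x, hx, hxe⟩ := h1
    obtain ⟨y, hy, hye⟩ := h2
    rw [← hxe, ← hye, sim]
    exact mul_le_mul (hratio_ge ω n) (hsep x hx y hy) hε.le (hratio_pos ω n).le
  have sep' : ∀ ω ω' n, (∀ k < n, ω k = ω' k) → ω n ≠ ω' n →
      rmin ^ n * ε ≤ dist (π ω) (π ω') := by
    intro ω ω' n hag hne
    cases hb : ω n
    · cases hb' : ω' n
      · exact absurd (hb.trans hb'.symm) hne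
      · rw [dist_comm]
        exact sep ω' ω n (fun k hk => (hag k hk).symm) hb' hb
    · cases hb' : ω' n
      · exact sep ω ω' n hag hb hb'
      · exact absurd (hb.trans hb'.symm) hne
  have hinj : Function.Injective π := by
    intro ω ω' hEq
    by_contra hne
    have hex : ∃ n, ω n ≠ ω' n := by
      by_contra hc
      push_neg at hc
      exact hne (funext hc)
    have hdiff := Nat.find_spec hex
    have hag : ∀ k < Nat.find hex, ω k = ω' k := fun k hk =>
      not_ne_iff.1 (Nat.find_min hex hk)
    have hle := sep' ω ω' (Nat.find hex) hag hdiff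
    rw [hEq, dist_self] at hle
    nlinarith [pow_pos hrmin0 (Nat.find hex)]
  set αr : ℝ := Real.logb rmin 2⁻¹ with hαrdef
  have hαr_pos : 0 < αr := by
    rw [hαrdef, Real.logb, div_pos_iff]
    right
    constructor
    · exact Real.log_neg (by norm_num) (by norm_num)
    · exact Real.log_neg hrmin0 hrmin1
  have hrminα : rmin ^ αr = (2:ℝ)⁻¹ :=
    Real.rpow_logb hrmin0 (ne_of_lt hrmin1) (by norm_num)
  set α : ℝ≥0 := ⟨αr, hαr_pos.le⟩ with hα
  set F : E → ℝ := fun x => bexp (Function.invFun π x) with hF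
  set S : Set E := Set.range π with hS
  have hSK : S ⊆ K := by
    rw [hS, Set.range_subset_iff]; exact πK
  have hFπ : ∀ ω, F (π ω) = bexp ω := by
    intro ω
    rw [hF]
    simp only
    rw [Function.leftInverse_invFun hinj ω]
  have hkey : ∀ ω ω', |bexp ω - bexp ω'|
      ≤ (ε ^ αr)⁻¹ * (dist (π ω) (π ω')) ^ αr := by
    intro ω ω'
    by_cases hEq : ω = ω'
    · subst hEq
      simp [Real.zero_rpow hαr_pos.ne']
    · have hex : ∃ n, ω n ≠ ω' n := by
        by_contra hc
        push_neg at hc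
        exact hEq (funext hc)
      set n := Nat.find hex with hn
      have hag : ∀ k < n, ω k = ω' k := fun k hk => not_ne_iff.1 (Nat.find_min hex hk)
      have hd := sep' ω ω' n hag (Nat.find_spec hex)
      have hb := bexp_close hag
      have e1 : ((2:ℝ)⁻¹) ^ n = (rmin ^ n) ^ αr := by
        rw [← hrminα, ← Real.rpow_natCast (rmin ^ αr) n, ← Real.rpow_natCast rmin n,
          ← Real.rpow_mul hrmin0.le, ← Real.rpow_mul hrmin0.le, mul_comm]
      have e2 : (rmin ^ n) ^ αr = (rmin ^ n * ε) ^ αr * (ε ^ αr)⁻¹ := by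
        rw [Real.mul_rpow (by positivity) hε.le]
        field_simp
      have e3 : (rmin ^ n * ε) ^ αr ≤ (dist (π ω) (π ω')) ^ αr :=
        Real.rpow_le_rpow (by positivity) hd hαr_pos.le
      calc |bexp ω - bexp ω'| ≤ ((2:ℝ)⁻¹) ^ n := hb
        _ = (rmin ^ n * ε) ^ αr * (ε ^ αr)⁻¹ := by rw [e1, e2]
        _ ≤ (dist (π ω) (π ω')) ^ αr * (ε ^ αr)⁻¹ := by
            apply mul_le_mul_of_nonneg_right e3
            positivity
        _ = (ε ^ αr)⁻¹ * (dist (π ω) (π ω')) ^ αr := by ring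
  set C : ℝ≥0 := ⟨(ε ^ αr)⁻¹, by positivity⟩ with hC
  have hHolder : HolderOnWith C α F S := by
    intro x hx y hy
    obtain ⟨ω, rfl⟩ := hx
    obtain ⟨ω', rfl⟩ := hy
    have hreal := hkey ω ω'
    calc edist (F (π ω)) (F (π ω'))
        = ENNReal.ofReal |bexp ω - bexp ω'| := by
          rw [edist_dist, Real.dist_eq, hFπ, hFπ]
      _ ≤ ENNReal.ofReal ((ε ^ αr)⁻¹ * dist (π ω) (π ω') ^ αr) :=
          ENNReal.ofReal_le_ofReal hreal
      _ = (C : ℝ≥0∞) * (edist (π ω) (π ω')) ^ (α : ℝ) := by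
          rw [ENNReal.ofReal_mul (by positivity), edist_dist,
            ← ENNReal.ofReal_rpow_of_nonneg dist_nonneg hαr_pos.le]
          congr 1
          rw [hC, ENNReal.ofReal_eq_coe_nnreal (inv_nonneg.2 (Real.rpow_nonneg hε.le _))]
          rfl
  have himg : Icc (0:ℝ) 1 ⊆ F '' S := by
    intro t ht
    obtain ⟨ω, hbω⟩ := bexp_surj ht.1 ht.2
    exact ⟨π ω, Set.mem_range_self ω, by rw [hFπ, hbω]⟩
  have hIcc : dimH (Icc (0:ℝ) 1) = 1 := by
    rw [Real.dimH_of_mem_nhds (x := (2⁻¹ : ℝ)) (Icc_mem_nhds (by norm_num) (by norm_num))]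
    simp
  have hα0 : (α : ℝ≥0∞) ≠ 0 := by
    simp only [ne_eq, ENNReal.coe_eq_zero]
    intro hc
    rw [hα] at hc
    exact hαr_pos.ne' (congrArg NNReal.toReal hc)
  have hαtop : (α : ℝ≥0∞) ≠ ⊤ := ENNReal.coe_ne_top
  have hαpos : (0 : ℝ≥0) < α := by
    rw [hα]; exact hαr_pos
  have hchain : (1 : ℝ≥0∞) ≤ dimH K / α := by
    calc (1 : ℝ≥0∞) = dimH (Icc (0:ℝ) 1) := hIcc.symm
      _ ≤ dimH (F '' S) := dimH_mono himg
      _ ≤ dimH S / α := hHolder.dimH_image_le hαpos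
      _ ≤ dimH K / α := ENNReal.div_le_div_right (dimH_mono hSK) _
  rw [ENNReal.le_div_iff_mul_le (Or.inl hα0) (Or.inl hαtop), one_mul] at hchain
  exact lt_of_lt_of_le (by simpa [pos_iff_ne_zero] using hα0) hchain

/-- **Lemma 4.1.** Every self-similar set in `ℝ^d` (attractor of an IFS of
contracting similarities) containing at least two points has positive Hausdorff
dimension. -/
theorem stmt10 (d m : ℕ) (ρ : Fin (m + 1) → ℝ) (hρ : ∀ j, 0 < ρ j ∧ ρ j < 1)
    (A : Fin (m + 1) → EuclideanSpace ℝ (Fin d) →L[ℝ] EuclideanSpace ℝ (Fin d))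
    (hA : ∀ j x, ‖A j x‖ = ρ j * ‖x‖)
    (c : Fin (m + 1) → EuclideanSpace ℝ (Fin d))
    (K : Set (EuclideanSpace ℝ (Fin d))) (hKc : IsCompact K) (hKnt : K.Nontrivial)
    (hK : K = ⋃ j, (fun x => A j x + c j) '' K) :
    0 < dimH K := by
  classical
  have hdist : ∀ (j : Fin (m+1)) (x y : EuclideanSpace ℝ (Fin d)),
      dist (A j x + c j) (A j y + c j) = ρ j * dist x y := by
    intro j x y
    rw [dist_eq_norm, dist_eq_norm]
    have : (A j x + c j) - (A j y + c j) = A j (x - y) := by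
      rw [map_sub]; abel
    rw [this, hA]
  have hfK : ∀ j : Fin (m+1), (fun x => A j x + c j) '' K ⊆ K := by
    intro j
    conv_rhs => rw [hK]
    exact Set.subset_iUnion (fun j => (fun x => A j x + c j) '' K) j
  obtain ⟨j0, -, hj0⟩ := Finset.exists_max_image (Finset.univ : Finset (Fin (m+1))) ρ
    ⟨0, Finset.mem_univ 0⟩
  set R : ℝ := ρ j0 with hRdef
  have hR0 : 0 < R := (hρ j0).1
  have hR1 : R < 1 := (hρ j0).2
  have hρle : ∀ j, ρ j ≤ R := fun j => hj0 j (Finset.mem_univ j)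
  -- small pieces of all generations
  have pieces : ∀ n : ℕ, ∀ x ∈ K,
      ∃ (f' : EuclideanSpace ℝ (Fin d) → EuclideanSpace ℝ (Fin d)) (r : ℝ),
      (∀ a b, dist (f' a) (f' b) = r * dist a b) ∧ 0 < r ∧ r ≤ R ^ n ∧
      f' '' K ⊆ K ∧ x ∈ f' '' K := by
    intro n
    induction n with
    | zero =>
      intro x hx
      exact ⟨id, 1, by simp, one_pos, by simp, by simp, by simpa using hx⟩
    | succ n ih =>
      intro x hx
      have hx' : x ∈ ⋃ j, (fun y => A j y + c j) '' K := hK ▸ hx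
      simp only [Set.mem_iUnion, Set.mem_image] at hx'
      obtain ⟨j, y, hyK, hyx⟩ := hx'
      obtain ⟨f', r, hsim, hr0, hrle, hfK', hyf⟩ := ih y hyK
      refine ⟨(fun z => A j z + c j) ∘ f', ρ j * r, ?_, mul_pos (hρ j).1 hr0, ?_, ?_, ?_⟩
      · intro u v
        show dist (A j (f' u) + c j) (A j (f' v) + c j) = _
        rw [hdist j, hsim]; ring
      · calc ρ j * r ≤ R * R ^ n :=
              mul_le_mul (hρle j) hrle hr0.le hR0.le
          _ = R ^ (n+1) := (pow_succ' R n).symm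
      · rw [Set.image_comp]
        exact subset_trans (Set.image_mono hfK') (hfK j)
      · obtain ⟨z, hzK, hzy⟩ := hyf
        exact ⟨z, hzK, by simp only [Function.comp_apply, hzy, hyx]⟩
  obtain ⟨a, haK, b, hbK, hab⟩ := hKnt
  set r0 : ℝ := dist a b with hr0def
  have hr0pos : 0 < r0 := dist_pos.2 hab
  set D : ℝ := diam K with hDdef
  have hD0 : 0 ≤ D := diam_nonneg
  -- choose a generation with small pieces
  obtain ⟨N, hN⟩ := exists_pow_lt_of_lt_one (show (0:ℝ) < r0/3/(D+1) by positivity) hR1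
  have hsmall : R ^ N * D < r0 / 3 := by
    have h1 : R ^ N * D ≤ R ^ N * (D + 1) := by nlinarith [pow_pos hR0 N]
    have h2 : R ^ N * (D + 1) < r0/3/(D+1) * (D+1) := by
      apply mul_lt_mul_of_pos_right hN; positivity
    have h3 : r0/3/(D+1) * (D+1) = r0/3 := by
      rw [div_mul_cancel₀]
      positivity
    linarith
  obtain ⟨g, rg, hgsim, hrg0, hrgle, hgK, hag⟩ := pieces (N+1) a haK
  obtain ⟨h, rh, hhsim, hrh0, hrhle, hhK, hbh⟩ := pieces (N+1) b hbK
  have hRN1 : R ^ (N+1) ≤ R ^ N := pow_le_pow_of_le_one hR0.le hR1.le (Nat.le_succ N)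
  have hRN1' : R ^ (N+1) < 1 := by
    calc R ^ (N+1) ≤ R := pow_le_of_le_one hR0.le hR1.le (Nat.succ_ne_zero N)
      _ < 1 := hR1
  have hrg1 : rg < 1 := lt_of_le_of_lt hrgle hRN1'
  have hrh1 : rh < 1 := lt_of_le_of_lt hrhle hRN1'
  have hgc : Continuous g :=
    (LipschitzWith.of_dist_le_mul (K := ⟨rg, hrg0.le⟩)
      (fun x y => le_of_eq (hgsim x y))).continuous
  have hhc : Continuous h :=
    (LipschitzWith.of_dist_le_mul (K := ⟨rh, hrh0.le⟩)
      (fun x y => le_of_eq (hhsim x y))).continuous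
  have hGc : IsCompact (g '' K) := hKc.image hgc
  have hHc : IsCompact (h '' K) := hKc.image hhc
  have hdiamG : diam (g '' K) < r0 / 3 := by
    have hle : diam (g '' K) ≤ rg * D := by
      apply diam_le_of_forall_dist_le (by positivity)
      rintro x ⟨u, hu, rfl⟩ y ⟨v, hv, rfl⟩
      rw [hgsim]
      exact mul_le_mul_of_nonneg_left (dist_le_diam_of_mem hKc.isBounded hu hv) hrg0.le
    calc diam (g '' K) ≤ rg * D := hle
      _ ≤ R ^ N * D := mul_le_mul_of_nonneg_right (hrgle.trans hRN1) hD0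
      _ < r0 / 3 := hsmall
  have hdiamH : diam (h '' K) < r0 / 3 := by
    have hle : diam (h '' K) ≤ rh * D := by
      apply diam_le_of_forall_dist_le (by positivity)
      rintro x ⟨u, hu, rfl⟩ y ⟨v, hv, rfl⟩
      rw [hhsim]
      exact mul_le_mul_of_nonneg_left (dist_le_diam_of_mem hKc.isBounded hu hv) hrh0.le
    calc diam (h '' K) ≤ rh * D := hle
      _ ≤ R ^ N * D := mul_le_mul_of_nonneg_right (hrhle.trans hRN1) hD0
      _ < r0 / 3 := hsmall
  have hdisj : ∀ z, z ∈ g '' K → z ∉ h '' K := by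
    intro z hzG hzH
    have h1 : dist a z ≤ diam (g '' K) := dist_le_diam_of_mem hGc.isBounded hag hzG
    have h2 : dist z b ≤ diam (h '' K) := dist_le_diam_of_mem hHc.isBounded hzH hbh
    have h3 : dist a b ≤ dist a z + dist z b := dist_triangle a z b
    rw [← hr0def] at h3
    linarith
  -- positive separation between the two pieces
  obtain ⟨x0, hx0G, hx0min⟩ := hGc.exists_isMinOn ⟨a, hag⟩
    (continuous_infDist_pt (h '' K)).continuousOn
  have hεpos : 0 < infDist x0 (h '' K) :=
    (hHc.isClosed.notMem_iff_infDist_pos ⟨b, hbh⟩).1 (hdisj x0 hx0G)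
  have hsep : ∀ x ∈ g '' K, ∀ y ∈ h '' K, infDist x0 (h '' K) ≤ dist x y := by
    intro x hx y hy
    calc infDist x0 (h '' K) ≤ infDist x (h '' K) := hx0min hx
      _ ≤ dist x y := infDist_le_dist_of_mem hy
  exact aux_dimH_pos K hKc a haK g h rg rh hrg0 hrg1 hrh0 hrh1 hgsim hhsim hgK hhK
    (infDist x0 (h '' K)) hεpos hsep
end

section
/- Every homogeneous self-similar set K ⊂ ℝ^d containing at least two points has the positive dimension sumset property: dim_H K > 0, and for every ℓ ≥ 2 there exist compact sets K₁, …, K_ℓ ⊂ ℝ^d with K₁ + ⋯ + K_ℓ ⊂ K and dim_H K_i > 0 for all i. -/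
open scoped NNReal ENNReal
open Filter Set
set_option linter.unusedSectionVars false
set_option maxHeartbeats 1000000

section Aux2
variable {E : Type*} [NormedAddCommGroup E] [NormedSpace ℝ E] [CompleteSpace E]
variable {B : E →L[ℝ] E} {r : ℝ} {t : Bool → E} {K : Set E}

noncomputable def gmap (B : E →L[ℝ] E) (t : Bool → E) (ω : ℕ → Bool) : E :=
  ∑' k, (B ^ k) (t (ω k))

lemma norm_pow_apply (hB : ∀ x, ‖B x‖ = r * ‖x‖) (k : ℕ) :
    ∀ x : E, ‖(B ^ k) x‖ = r ^ k * ‖x‖ := by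
  induction k with
  | zero => intro x; simp
  | succ n ih =>
    intro x
    rw [pow_succ, ContinuousLinearMap.mul_apply, ih, hB, pow_succ]
    ring

lemma summable_aux (hr0 : 0 < r) (hr1 : r < 1) (hB : ∀ x, ‖B x‖ = r * ‖x‖)
    (c : ℕ → E) (M : ℝ) (hM : ∀ k, ‖c k‖ ≤ M) :
    Summable fun k => (B ^ k) (c k) := by
  apply Summable.of_norm_bounded (g := fun k => r ^ k * M)
  · exact (summable_geometric_of_lt_one hr0.le hr1).mul_right M
  · intro k
    rw [norm_pow_apply hB _]
    exact mul_le_mul_of_nonneg_left (hM k) (pow_nonneg hr0.le k)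

lemma summable_gmap (hr0 : 0 < r) (hr1 : r < 1) (hB : ∀ x, ‖B x‖ = r * ‖x‖) (ω : ℕ → Bool) :
    Summable fun k => (B ^ k) (t (ω k)) := by
  refine summable_aux hr0 hr1 hB _ (max ‖t false‖ ‖t true‖) fun k => ?_
  cases ω k
  · exact le_max_left _ _
  · exact le_max_right _ _

lemma gmap_rec (hr0 : 0 < r) (hr1 : r < 1) (hB : ∀ x, ‖B x‖ = r * ‖x‖) (ω : ℕ → Bool) :
    gmap B t ω = t (ω 0) + B (gmap B t fun k => ω (k + 1)) := by
  have hs := summable_gmap (t := t) hr0 hr1 hB ω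
  have hs' := summable_gmap (t := t) hr0 hr1 hB (fun k => ω (k + 1))
  rw [gmap, Summable.tsum_eq_zero_add hs, pow_zero, ContinuousLinearMap.one_apply]
  congr 1
  rw [gmap, ContinuousLinearMap.map_tsum B hs']
  refine tsum_congr fun k => ?_
  rw [pow_succ', ContinuousLinearMap.mul_apply]

lemma partial_mem (hK : IsClosed K) (hmaps : ∀ c : Bool, ∀ z ∈ K, B z + t c ∈ K) :
    ∀ (N : ℕ) (ω : ℕ → Bool), ∀ z ∈ K,
      (∑ k ∈ Finset.range N, (B ^ k) (t (ω k))) + (B ^ N) z ∈ K := by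
  intro N
  induction N with
  | zero => intro ω z hz; simpa using hz
  | succ n ih =>
    intro ω z hz
    have h1 : (∑ k ∈ Finset.range (n + 1), (B ^ k) (t (ω k))) + (B ^ (n + 1)) z
        = B ((∑ k ∈ Finset.range n, (B ^ k) (t ((fun j => ω (j + 1)) k))) + (B ^ n) z) + t (ω 0) := by
      rw [Finset.sum_range_succ' (fun k => (B ^ k) (t (ω k)))]
      rw [map_add, map_sum]
      simp only [pow_zero, ContinuousLinearMap.one_apply]
      have e1 : ∀ k : ℕ, (B ^ (k + 1)) (t (ω (k + 1))) = B ((B ^ k) (t (ω (k + 1)))) := by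
        intro k; rw [pow_succ', ContinuousLinearMap.mul_apply]
      have e2 : (B ^ (n + 1)) z = B ((B ^ n) z) := by
        rw [pow_succ', ContinuousLinearMap.mul_apply]
      simp only [e1, e2]
      abel
    rw [h1]
    exact hmaps (ω 0) _ (ih _ z hz)

lemma gmap_mem (hr0 : 0 < r) (hr1 : r < 1) (hB : ∀ x, ‖B x‖ = r * ‖x‖)
    (hK : IsClosed K) (hKne : K.Nonempty) (hmaps : ∀ c : Bool, ∀ z ∈ K, B z + t c ∈ K)
    (ω : ℕ → Bool) : gmap B t ω ∈ K := by
  obtain ⟨z, hz⟩ := hKne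
  have hs := summable_gmap (t := t) hr0 hr1 hB ω
  have h1 : Tendsto (fun N => ∑ k ∈ Finset.range N, (B ^ k) (t (ω k))) atTop (nhds (gmap B t ω)) :=
    (hs.hasSum_iff_tendsto_nat.mp hs.hasSum)
  have h2 : Tendsto (fun N => (B ^ N) z) atTop (nhds 0) := by
    apply squeeze_zero_norm (fun N => (norm_pow_apply hB N z).le)
    simpa using (tendsto_pow_atTop_nhds_zero_of_lt_one hr0.le hr1).mul_const ‖z‖
  have h3 : Tendsto (fun N => (∑ k ∈ Finset.range N, (B ^ k) (t (ω k))) + (B ^ N) z)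
      atTop (nhds (gmap B t ω)) := by
    simpa using h1.add h2
  exact hK.mem_of_tendsto h3 (Eventually.of_forall fun N => partial_mem hK hmaps N ω z hz)

lemma gmap_sub (hr0 : 0 < r) (hr1 : r < 1) (hB : ∀ x, ‖B x‖ = r * ‖x‖) (ω ω' : ℕ → Bool) :
    gmap B t ω - gmap B t ω' = ∑' k, (B ^ k) (t (ω k) - t (ω' k)) := by
  rw [gmap, gmap, ← Summable.tsum_sub (summable_gmap hr0 hr1 hB ω) (summable_gmap hr0 hr1 hB ω')]
  exact tsum_congr fun k => (map_sub (B ^ k) _ _).symm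

lemma gmap_agree (hr0 : 0 < r) (hr1 : r < 1) (hB : ∀ x, ‖B x‖ = r * ‖x‖) :
    ∀ (N : ℕ) (ω ω' : ℕ → Bool), (∀ k < N, ω k = ω' k) →
    gmap B t ω - gmap B t ω' = (B ^ N) (gmap B t (fun k => ω (k + N)) - gmap B t (fun k => ω' (k + N))) := by
  intro N
  induction N with
  | zero => intro ω ω' _; simp
  | succ n ih =>
    intro ω ω' h
    rw [gmap_rec hr0 hr1 hB ω, gmap_rec hr0 hr1 hB ω', h 0 (Nat.succ_pos n)]
    have h2 := ih (fun k => ω (k + 1)) (fun k => ω' (k + 1))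
      (fun k hk => h (k + 1) (by omega))
    rw [add_sub_add_left_eq_sub, ← map_sub, h2]
    have e1 : ∀ k, k + n + 1 = k + (n + 1) := by omega
    simp only [e1]
    rw [pow_succ', ContinuousLinearMap.mul_apply]

lemma gmap_sep {ε₀ : ℝ} (hr0 : 0 < r) (hr1 : r < 1) (hB : ∀ x, ‖B x‖ = r * ‖x‖)
    (hK : IsClosed K) (hKne : K.Nonempty) (hmaps : ∀ c : Bool, ∀ z ∈ K, B z + t c ∈ K)
    (hsep : ∀ z ∈ K, ∀ z' ∈ K, ε₀ ≤ ‖(B z + t false) - (B z' + t true)‖)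
    (ω ω' : ℕ → Bool) (h0 : ω 0 ≠ ω' 0) :
    ε₀ ≤ ‖gmap B t ω - gmap B t ω'‖ := by
  have hz : gmap B t (fun k => ω (k + 1)) ∈ K := gmap_mem hr0 hr1 hB hK hKne hmaps _
  have hz' : gmap B t (fun k => ω' (k + 1)) ∈ K := gmap_mem hr0 hr1 hB hK hKne hmaps _
  rw [gmap_rec hr0 hr1 hB ω, gmap_rec hr0 hr1 hB ω']
  rcases Bool.eq_false_or_eq_true (ω 0) with h | h <;>
    rcases Bool.eq_false_or_eq_true (ω' 0) with h' | h' <;>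
      rw [h, h'] at h0 ⊢
  · exact absurd rfl h0
  · rw [norm_sub_rev, add_comm (t false), add_comm (t true)]
    exact hsep _ hz' _ hz
  · rw [add_comm (t false), add_comm (t true)]
    exact hsep _ hz _ hz'
  · exact absurd rfl h0

lemma gmap_lower {ε₀ : ℝ} (hr0 : 0 < r) (hr1 : r < 1) (hB : ∀ x, ‖B x‖ = r * ‖x‖)
    (hK : IsClosed K) (hKne : K.Nonempty) (hmaps : ∀ c : Bool, ∀ z ∈ K, B z + t c ∈ K)
    (hsep : ∀ z ∈ K, ∀ z' ∈ K, ε₀ ≤ ‖(B z + t false) - (B z' + t true)‖)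
    {N : ℕ} (ω ω' : ℕ → Bool) (hag : ∀ k < N, ω k = ω' k) (hN : ω N ≠ ω' N) :
    ε₀ * r ^ N ≤ ‖gmap B t ω - gmap B t ω'‖ := by
  rw [gmap_agree hr0 hr1 hB N ω ω' hag, norm_pow_apply hB, mul_comm]
  have := gmap_sep hr0 hr1 hB hK hKne hmaps hsep (fun k => ω (k + N)) (fun k => ω' (k + N))
    (by simpa using hN)
  exact mul_le_mul_of_nonneg_left this (pow_nonneg hr0.le N)


noncomputable def bval (ω : ℕ → Bool) : ℝ :=
  ∑' j, cond (ω j) ((2:ℝ)⁻¹ ^ (j + 1)) 0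

lemma bval_term_bound (ω : ℕ → Bool) (j : ℕ) :
    0 ≤ cond (ω j) ((2:ℝ)⁻¹ ^ (j + 1)) 0 ∧ cond (ω j) ((2:ℝ)⁻¹ ^ (j + 1)) 0 ≤ (2:ℝ)⁻¹ ^ (j + 1) := by
  cases ω j <;> simp <;> positivity

lemma summable_half : Summable (fun j : ℕ => (2:ℝ)⁻¹ ^ (j + 1)) := by
  have h := (summable_geometric_of_lt_one (by norm_num : (0:ℝ) ≤ 2⁻¹)
    (by norm_num : (2:ℝ)⁻¹ < 1)).mul_left (2:ℝ)⁻¹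
  exact h.congr (fun j => by rw [pow_succ]; ring)

lemma summable_bval (ω : ℕ → Bool) :
    Summable fun j => cond (ω j) ((2:ℝ)⁻¹ ^ (j + 1)) 0 :=
  Summable.of_nonneg_of_le (fun j => (bval_term_bound ω j).1)
    (fun j => (bval_term_bound ω j).2) summable_half

lemma bval_nonneg (ω : ℕ → Bool) : 0 ≤ bval ω :=
  tsum_nonneg fun j => (bval_term_bound ω j).1

lemma tsum_half_pow : ∑' j : ℕ, (2:ℝ)⁻¹ ^ (j + 1) = 1 := by
  have h1 : ∀ j : ℕ, (2:ℝ)⁻¹ ^ (j + 1) = (2:ℝ)⁻¹ * (2:ℝ)⁻¹ ^ j := fun j => by rw [pow_succ]; ring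
  simp only [h1]
  rw [tsum_mul_left, tsum_geometric_of_lt_one (by norm_num) (by norm_num)]
  norm_num

lemma bval_le_one (ω : ℕ → Bool) : bval ω ≤ 1 := by
  rw [← tsum_half_pow]
  exact Summable.tsum_le_tsum (fun j => (bval_term_bound ω j).2) (summable_bval ω)
    ((summable_bval (fun _ => true)).congr (fun j => by simp))

lemma bval_rec (ω : ℕ → Bool) :
    bval ω = cond (ω 0) (2:ℝ)⁻¹ 0 + (2:ℝ)⁻¹ * bval (fun k => ω (k + 1)) := by
  rw [bval, Summable.tsum_eq_zero_add (summable_bval ω)]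
  congr 1
  · cases ω 0 <;> simp
  · rw [bval, ← tsum_mul_left]
    refine tsum_congr fun j => ?_
    cases ω (j + 1) <;> simp [pow_succ] <;> ring

lemma bval_agree : ∀ (N : ℕ) (ω ω' : ℕ → Bool), (∀ k < N, ω k = ω' k) →
    |bval ω - bval ω'| ≤ (2:ℝ)⁻¹ ^ N := by
  intro N
  induction N with
  | zero =>
    intro ω ω' _
    rw [pow_zero, abs_sub_le_iff]
    constructor <;> nlinarith [bval_nonneg ω, bval_le_one ω, bval_nonneg ω', bval_le_one ω']
  | succ n ih =>
    intro ω ω' h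
    rw [bval_rec ω, bval_rec ω', h 0 (Nat.succ_pos n), add_sub_add_left_eq_sub, ← mul_sub,
      abs_mul, pow_succ']
    rw [abs_of_nonneg (by norm_num : (0:ℝ) ≤ (2:ℝ)⁻¹)]
    exact mul_le_mul_of_nonneg_left (ih _ _ fun k hk => h (k + 1) (by omega)) (by norm_num)

lemma floor_double (y : ℝ) : 2 * ⌊y⌋ ≤ ⌊2 * y⌋ ∧ ⌊2 * y⌋ ≤ 2 * ⌊y⌋ + 1 := by
  constructor
  · apply Int.le_floor.2
    push_cast
    nlinarith [Int.floor_le y]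
  · have h2 : (2:ℝ) * y < 2 * (⌊y⌋ + 1) := by nlinarith [Int.lt_floor_add_one y]
    have := Int.floor_le_floor (le_of_lt h2)
    have h3 : ⌊(2:ℝ) * (⌊y⌋ + 1)⌋ = 2 * ⌊y⌋ + 2 := by
      rw [show ((⌊y⌋:ℝ) + 1) = ((⌊y⌋ + 1 : ℤ) : ℝ) by push_cast; ring]
      rw [show (2:ℝ) * ((⌊y⌋ + 1 : ℤ) : ℝ) = ((2 * (⌊y⌋ + 1) : ℤ) : ℝ) by push_cast; ring]
      rw [Int.floor_intCast]; ring
    have h4 : ⌊2 * y⌋ < 2 * ⌊y⌋ + 2 := by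
      have := Int.floor_lt.2 (by push_cast; nlinarith [Int.lt_floor_add_one y] :
        (2:ℝ) * y < ((2 * ⌊y⌋ + 2 : ℤ) : ℝ))
      exact this
    omega

lemma bval_surj {x : ℝ} (hx : x ∈ Set.Ico (0:ℝ) 1) : ∃ ω, bval ω = x := by
  obtain ⟨hx0, hx1⟩ := hx
  set D : ℕ → ℤ := fun j => ⌊x * 2 ^ (j + 1)⌋ - 2 * ⌊x * 2 ^ j⌋ with hD
  have hD01 : ∀ j, D j = 0 ∨ D j = 1 := by
    intro j
    have := floor_double (x * 2 ^ j)
    have he : 2 * (x * 2 ^ j) = x * 2 ^ (j + 1) := by ring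
    rw [he] at this
    simp only [hD]
    omega
  refine ⟨fun j => decide (D j = 1), ?_⟩
  have hterm : ∀ j, cond (decide (D j = 1)) ((2:ℝ)⁻¹ ^ (j + 1)) 0
      = (D j : ℝ) * (2:ℝ)⁻¹ ^ (j + 1) := by
    intro j
    rcases hD01 j with h | h <;> rw [h] <;> simp
  have hpartial : ∀ N, ∑ j ∈ Finset.range N, cond (decide (D j = 1)) ((2:ℝ)⁻¹ ^ (j + 1)) 0
      = (⌊x * 2 ^ N⌋ : ℝ) / 2 ^ N := by
    intro N
    have := Finset.sum_range_sub (fun j => (⌊x * 2 ^ j⌋ : ℝ) / 2 ^ j) N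
    rw [show (⌊x * 2 ^ 0⌋ : ℝ) / 2 ^ 0 = 0 by
      rw [pow_zero, mul_one, Int.floor_eq_zero_iff.2 ⟨hx0, hx1⟩]; simp] at this
    rw [sub_zero] at this
    rw [← this]
    refine Finset.sum_congr rfl fun j _ => ?_
    rw [hterm j, hD]
    have h2j : (2:ℝ) ^ j ≠ 0 := by positivity
    have h2j1 : (2:ℝ) ^ (j + 1) ≠ 0 := by positivity
    push_cast
    simp only [div_eq_mul_inv, ← inv_pow]
    ring
  have htend : Tendsto (fun N => ∑ j ∈ Finset.range N, cond (decide (D j = 1)) ((2:ℝ)⁻¹ ^ (j + 1)) 0)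
      atTop (nhds x) := by
    simp only [hpartial]
    rw [show nhds x = nhds (x - 0) by rw [sub_zero]]
    have : ∀ N : ℕ, (⌊x * 2 ^ N⌋ : ℝ) / 2 ^ N = x - (x * 2 ^ N - ⌊x * 2 ^ N⌋) / 2 ^ N := by
      intro N
      have h2N : (2:ℝ) ^ N ≠ 0 := by positivity
      field_simp
      ring
    simp only [this]
    apply Tendsto.sub tendsto_const_nhds
    apply squeeze_zero_norm (a := fun N => (2:ℝ)⁻¹ ^ N)
    · intro N
      have h2N : (0:ℝ) < 2 ^ N := by positivity
      have hnum : (0:ℝ) ≤ x * 2 ^ N - ⌊x * 2 ^ N⌋ := by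
        nlinarith [Int.floor_le (x * 2 ^ N)]
      rw [Real.norm_eq_abs, abs_of_nonneg (div_nonneg hnum h2N.le)]
      rw [div_le_iff₀ h2N, inv_pow, inv_mul_cancel₀ (by positivity : ((2:ℝ) ^ N) ≠ 0)]
      nlinarith [Int.lt_floor_add_one (x * 2 ^ N)]
    · exact tendsto_pow_atTop_nhds_zero_of_lt_one (by norm_num) (by norm_num)
  exact ((summable_bval _).hasSum_iff_tendsto_nat.2 htend).tsum_eq
def emap (ℓ i : ℕ) (ω : ℕ → Bool) : ℕ → Bool :=
  fun k => if k % ℓ = i then ω (k / ℓ) else false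

lemma emap_apply {ℓ i : ℕ} (hi : i < ℓ) (ω : ℕ → Bool) (j : ℕ) :
    emap ℓ i ω (j * ℓ + i) = ω j := by
  have hℓ : 0 < ℓ := Nat.lt_of_le_of_lt (Nat.zero_le i) hi
  have h1 : (j * ℓ + i) % ℓ = i := by
    rw [show j * ℓ + i = i + j * ℓ by ring, Nat.add_mul_mod_self_right, Nat.mod_eq_of_lt hi]
  have h2 : (j * ℓ + i) / ℓ = j := by
    rw [show j * ℓ + i = i + ℓ * j by ring, Nat.add_mul_div_left _ _ hℓ,
      Nat.div_eq_of_lt hi, zero_add]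
  rw [emap, h1, if_pos rfl, h2]

lemma emap_agree {ℓ i : ℕ} (hi : i < ℓ) {J : ℕ} {ω ω' : ℕ → Bool}
    (h : ∀ k < J, ω k = ω' k) :
    ∀ k < J * ℓ + i, emap ℓ i ω k = emap ℓ i ω' k := by
  intro k hk
  rw [emap, emap]
  by_cases hm : k % ℓ = i
  · rw [if_pos hm, if_pos hm]
    have hq := Nat.div_add_mod k ℓ
    have h5 : ℓ * (k / ℓ) < J * ℓ := by omega
    rw [mul_comm J ℓ] at h5
    exact h _ (Nat.lt_of_mul_lt_mul_left h5)
  · rw [if_neg hm, if_neg hm]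

lemma emap_continuous (ℓ i : ℕ) : Continuous (emap ℓ i) := by
  apply continuous_pi
  intro k
  by_cases hm : k % ℓ = i
  · simp only [emap, if_pos hm]
    exact continuous_apply _
  · simp only [emap, if_neg hm]
    exact continuous_const

section Dim
variable {E : Type*} [NormedAddCommGroup E] [NormedSpace ℝ E] [CompleteSpace E]
variable {B : E →L[ℝ] E} {r : ℝ} {t : Bool → E} {K : Set E} {ε₀ : ℝ}

lemma gmap_continuous (hr0 : 0 < r) (hr1 : r < 1) (hB : ∀ x, ‖B x‖ = r * ‖x‖) :
    Continuous (gmap B t) := by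
  apply continuous_tsum (u := fun k => r ^ k * (max ‖t false‖ ‖t true‖))
  · intro k
    exact (B ^ k).continuous.comp
      ((continuous_of_discreteTopology (f := t)).comp (continuous_apply k))
  · exact (summable_geometric_of_lt_one hr0.le hr1).mul_right _
  · intro k ω
    rw [norm_pow_apply hB]
    refine mul_le_mul_of_nonneg_left ?_ (pow_nonneg hr0.le k)
    cases ω k
    · exact le_max_left _ _
    · exact le_max_right _ _

lemma dim_range_pos (hr0 : 0 < r) (hr1 : r < 1) (hB : ∀ x, ‖B x‖ = r * ‖x‖)
    (hK : IsClosed K) (hKne : K.Nonempty) (hmaps : ∀ c : Bool, ∀ z ∈ K, B z + t c ∈ K)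
    (hε : 0 < ε₀)
    (hsep : ∀ z ∈ K, ∀ z' ∈ K, ε₀ ≤ ‖(B z + t false) - (B z' + t true)‖)
    {ℓ i : ℕ} (hi : i < ℓ) :
    0 < dimH (Set.range fun ω : ℕ → Bool => gmap B t (emap ℓ i ω)) := by
  have hℓ : 0 < ℓ := Nat.lt_of_le_of_lt (Nat.zero_le i) hi
  set G : (ℕ → Bool) → E := fun ω => gmap B t (emap ℓ i ω) with hG
  set R : ℝ := r ^ ℓ with hRdef
  have hR0 : 0 < R := pow_pos hr0 ℓ
  have hR1 : R < 1 := pow_lt_one₀ hr0.le hr1 hℓ.ne'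
  set c : ℝ := ε₀ * R with hcdef
  have hc : 0 < c := mul_pos hε hR0
  -- key separation estimate
  have key : ∀ (ω ω' : ℕ → Bool) (J : ℕ), (∀ k < J, ω k = ω' k) → ω J ≠ ω' J →
      c * R ^ J ≤ ‖G ω - G ω'‖ := by
    intro ω ω' J hag hJ
    have h1 : ε₀ * r ^ (J * ℓ + i) ≤ ‖G ω - G ω'‖ := by
      apply gmap_lower hr0 hr1 hB hK hKne hmaps hsep
      · exact emap_agree hi hag
      · rw [emap_apply hi, emap_apply hi]
        exact hJ
    refine le_trans ?_ h1
    have h2 : c * R ^ J = ε₀ * r ^ (ℓ + ℓ * J) := by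
      rw [hcdef, hRdef, pow_add, pow_mul]; ring
    rw [h2]
    refine mul_le_mul_of_nonneg_left ?_ hε.le
    exact pow_le_pow_of_le_one hr0.le hr1.le (by nlinarith)
  -- well-definedness of the address value
  have hval : ∀ ω ω' : ℕ → Bool, G ω = G ω' → bval ω = bval ω' := by
    intro ω ω' hGe
    by_contra hne
    have hωne : ∃ k, ω k ≠ ω' k := by
      by_contra hh
      push_neg at hh
      exact hne (by rw [funext hh])
    set J := Nat.find hωne with hJdef
    have h1 := key ω ω' J (fun k hk => not_not.1 (Nat.find_min hωne hk)) (Nat.find_spec hωne)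
    rw [hGe, sub_self, norm_zero] at h1
    nlinarith [pow_pos hR0 J]
  classical
  set h : E → ℝ := fun x => if hx : ∃ ω, G ω = x then bval hx.choose else 0 with hh
  have hhG : ∀ ω, h (G ω) = bval ω := by
    intro ω
    have hx : ∃ ω', G ω' = G ω := ⟨ω, rfl⟩
    rw [hh]
    simp only [dif_pos hx]
    exact hval _ _ hx.choose_spec
  -- the Hölder exponent
  set α : ℝ := Real.log 2 / (-Real.log R) with hα
  have hlogR : Real.log R < 0 := Real.log_neg hR0 hR1
  have hα0 : 0 < α := div_pos (Real.log_pos one_lt_two) (by linarith)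
  have hRα : R ^ α = 2⁻¹ := by
    rw [Real.rpow_def_of_pos hR0, hα]
    have : Real.log R * (Real.log 2 / (-Real.log R)) = -Real.log 2 := by
      rw [mul_comm, div_neg, neg_mul, div_mul_cancel₀ _ hlogR.ne]
    rw [this, Real.exp_neg, Real.exp_log two_pos]
  have key2 : ∀ J : ℕ, ((2:ℝ)⁻¹) ^ J = (R ^ J) ^ α := by
    intro J
    rw [← Real.rpow_natCast R J, ← Real.rpow_mul hR0.le, mul_comm, Real.rpow_mul hR0.le, hRα,
      Real.rpow_natCast]
  set Cr : ℝ := (c ^ α)⁻¹ with hCr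
  have hcα : 0 < c ^ α := Real.rpow_pos_of_pos hc α
  have hCr0 : 0 < Cr := inv_pos.2 hcα
  -- the real Hölder inequality
  have holder : ∀ ω ω' : ℕ → Bool, |h (G ω) - h (G ω')| ≤ Cr * ‖G ω - G ω'‖ ^ α := by
    intro ω ω'
    rw [hhG, hhG]
    by_cases hbe : bval ω = bval ω'
    · rw [hbe, sub_self, abs_zero]
      positivity
    · have hωne : ∃ k, ω k ≠ ω' k := by
        by_contra hhh
        push_neg at hhh
        exact hbe (by rw [funext hhh])
      set J := Nat.find hωne with hJdef
      have h1 := key ω ω' J (fun k hk => not_not.1 (Nat.find_min hωne hk)) (Nat.find_spec hωne)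
      have h2 : |bval ω - bval ω'| ≤ (2:ℝ)⁻¹ ^ J :=
        bval_agree J ω ω' (fun k hk => not_not.1 (Nat.find_min hωne hk))
      have h3 : (c * R ^ J) ^ α ≤ ‖G ω - G ω'‖ ^ α :=
        Real.rpow_le_rpow (by positivity) h1 hα0.le
      have h4 : (c * R ^ J) ^ α = c ^ α * (R ^ J) ^ α :=
        Real.mul_rpow hc.le (by positivity)
      calc |bval ω - bval ω'| ≤ (2:ℝ)⁻¹ ^ J := h2
        _ = (R ^ J) ^ α := key2 J
        _ = Cr * (c ^ α * (R ^ J) ^ α) := by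
            rw [hCr]; field_simp
        _ = Cr * (c * R ^ J) ^ α := by rw [h4]
        _ ≤ Cr * ‖G ω - G ω'‖ ^ α := by
            exact mul_le_mul_of_nonneg_left h3 hCr0.le
  -- package as HolderOnWith
  have hαcoe : ((α.toNNReal : ℝ≥0) : ℝ) = α := Real.coe_toNNReal α hα0.le
  have hα'pos : 0 < α.toNNReal := Real.toNNReal_pos.2 hα0
  have hHolder : HolderOnWith Cr.toNNReal α.toNNReal h (Set.range G) := by
    intro x hx y hy
    obtain ⟨ω, rfl⟩ := hx
    obtain ⟨ω', rfl⟩ := hy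
    by_cases hxy : G ω = G ω'
    · rw [hxy]
      simp
    · have hpos : 0 < ‖G ω - G ω'‖ := by
        rw [norm_pos_iff, sub_ne_zero]
        exact hxy
      have hre := holder ω ω'
      rw [edist_dist, edist_dist, Real.dist_eq, dist_eq_norm]
      rw [ENNReal.ofReal_rpow_of_pos hpos]
      rw [show ((Cr.toNNReal : ℝ≥0∞)) = ENNReal.ofReal Cr from rfl]
      rw [hαcoe, ← ENNReal.ofReal_mul hCr0.le]
      exact ENNReal.ofReal_le_ofReal hre
  -- conclude
  have h1 : dimH (h '' Set.range G) ≤ dimH (Set.range G) / α.toNNReal :=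
    hHolder.dimH_image_le hα'pos
  have h2 : Set.Ico (0:ℝ) 1 ⊆ h '' Set.range G := by
    intro x hx
    obtain ⟨ω, hω⟩ := bval_surj hx
    exact ⟨G ω, Set.mem_range_self _, by rw [hhG]; exact hω⟩
  have h3 : dimH (Set.Ico (0:ℝ) 1) = 1 := by
    rw [Real.dimH_of_nonempty_interior (by rw [interior_Ico]; exact ⟨1/2, by norm_num⟩)]
    simp
  have h4 : (1 : ℝ≥0∞) ≤ dimH (Set.range G) / α.toNNReal := by
    rw [← h3]
    exact (dimH_mono h2).trans h1
  have h5 : (α.toNNReal : ℝ≥0∞) ≤ dimH (Set.range G) := by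
    have := (ENNReal.le_div_iff_mul_le (Or.inl (by exact_mod_cast hα'pos.ne'))
      (Or.inl (ENNReal.coe_ne_top))).1 h4
    rwa [one_mul] at this
  calc (0 : ℝ≥0∞) < (α.toNNReal : ℝ≥0∞) := by exact_mod_cast hα'pos
    _ ≤ dimH (Set.range G) := h5

end Dim

section Sum
variable {E : Type*} [NormedAddCommGroup E] [NormedSpace ℝ E] [CompleteSpace E]
variable {B : E →L[ℝ] E} {r : ℝ} {t : Bool → E}

lemma summable_diff (hr0 : 0 < r) (hr1 : r < 1) (hB : ∀ x, ‖B x‖ = r * ‖x‖) (c : ℕ → Bool) :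
    Summable fun k => (B ^ k) (t (c k) - t false) := by
  refine summable_aux hr0 hr1 hB _ (max ‖t false‖ ‖t true‖ + ‖t false‖) fun k => ?_
  refine (norm_sub_le _ _).trans (add_le_add_left ?_ _)
  cases c k
  · exact le_max_left _ _
  · exact le_max_right _ _

lemma gmap_sub_false (hr0 : 0 < r) (hr1 : r < 1) (hB : ∀ x, ‖B x‖ = r * ‖x‖) (c : ℕ → Bool) :
    gmap B t c - gmap B t (fun _ => false) = ∑' k, (B ^ k) (t (c k) - t false) :=
  gmap_sub hr0 hr1 hB c _

lemma gmap_emap_sum (hr0 : 0 < r) (hr1 : r < 1) (hB : ∀ x, ‖B x‖ = r * ‖x‖)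
    {ℓ : ℕ} (hℓ : 0 < ℓ) (ω : Fin ℓ → ℕ → Bool) :
    ∑ i : Fin ℓ, (gmap B t (emap ℓ (i : ℕ) (ω i)) - gmap B t (fun _ => false))
      = gmap B t (fun k => ω ⟨k % ℓ, Nat.mod_lt k hℓ⟩ (k / ℓ)) - gmap B t (fun _ => false) := by
  simp only [gmap_sub_false hr0 hr1 hB]
  rw [← Summable.tsum_finsetSum (fun i _ => summable_diff hr0 hr1 hB _)]
  refine tsum_congr fun k => ?_
  have hi0 : (⟨k % ℓ, Nat.mod_lt k hℓ⟩ : Fin ℓ) ∈ Finset.univ := Finset.mem_univ _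
  rw [Finset.sum_eq_single (⟨k % ℓ, Nat.mod_lt k hℓ⟩ : Fin ℓ)]
  · congr 2
    rw [emap, if_pos rfl]
  · intro i _ hne
    have hm : k % ℓ ≠ (i : ℕ) := by
      intro hcontra
      exact hne (Fin.ext hcontra.symm)
    rw [emap, if_neg hm, sub_self, map_zero]
  · intro hcontra
    exact absurd hi0 hcontra

end Sum

section Cyl
variable {E : Type*} [NormedAddCommGroup E] [NormedSpace ℝ E] [CompleteSpace E]

lemma cyl {m : ℕ} (A : E →L[ℝ] E) (b : Fin (m + 1) → E) (K : Set E)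
    (hK : K = ⋃ j, (fun x => A x + b j) '' K) :
    ∀ n : ℕ, ∀ x ∈ K, ∃ t : E, (∀ z ∈ K, (A ^ n) z + t ∈ K) ∧ ∃ z ∈ K, x = (A ^ n) z + t := by
  have hmap : ∀ (j : Fin (m + 1)), ∀ w ∈ K, A w + b j ∈ K := by
    intro j w hw
    rw [hK]
    exact Set.mem_iUnion.2 ⟨j, Set.mem_image_of_mem _ hw⟩
  intro n
  induction n with
  | zero =>
    intro x hx
    exact ⟨0, fun z hz => by simpa using hz, x, hx, by simp⟩
  | succ n ih =>
    intro x hx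
    rw [hK] at hx
    obtain ⟨j, y, hy, hxy⟩ := by
      simpa only [Set.mem_iUnion, Set.mem_image] using hx
    obtain ⟨t', hcl, z, hz, hrep⟩ := ih y hy
    refine ⟨A t' + b j, ?_, z, hz, ?_⟩
    · intro w hw
      have h1 : (A ^ (n + 1)) w + (A t' + b j) = A ((A ^ n) w + t') + b j := by
        rw [pow_succ', ContinuousLinearMap.mul_apply, map_add]
        abel
      rw [h1]
      exact hmap j _ (hcl w hw)
    · rw [← hxy, hrep, pow_succ', ContinuousLinearMap.mul_apply, map_add]
      abel

end Cyl

/-- **Lemma 4.2.** Every homogeneous self-similar set `K ⊆ ℝ^d` with at least two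
points has the positive dimension sumset property: `dim_H K > 0`, and for every
`ℓ ≥ 2` there are compact sets `K₁, …, K_ℓ` with `K₁ + ⋯ + K_ℓ ⊆ K` and
`dim_H Kᵢ > 0` for all `i`. -/
theorem stmt11 (d m : ℕ) (ρ : ℝ) (hρ0 : 0 < ρ) (hρ1 : ρ < 1)
    (A : EuclideanSpace ℝ (Fin d) →L[ℝ] EuclideanSpace ℝ (Fin d))
    (hA : ∀ x, ‖A x‖ = ρ * ‖x‖)
    (b : Fin (m + 1) → EuclideanSpace ℝ (Fin d))
    (K : Set (EuclideanSpace ℝ (Fin d))) (hKc : IsCompact K) (hKnt : K.Nontrivial)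
    (hK : K = ⋃ j, (fun x => A x + b j) '' K) :
    0 < dimH K ∧
    ∀ ℓ : ℕ, 2 ≤ ℓ → ∃ Ks : Fin ℓ → Set (EuclideanSpace ℝ (Fin d)),
      (∀ i, IsCompact (Ks i)) ∧
      {x | ∃ f : Fin ℓ → EuclideanSpace ℝ (Fin d), (∀ i, f i ∈ Ks i) ∧ x = ∑ i, f i} ⊆ K ∧
      ∀ i, 0 < dimH (Ks i) := by
  classical
  have hKcl : IsClosed K := hKc.isClosed
  have hKne : K.Nonempty := hKnt.nonempty
  obtain ⟨x, hx, y, hy, hxy⟩ := hKnt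
  set δ : ℝ := dist x y with hδdef
  have hδ : 0 < δ := dist_pos.2 hxy
  have hbd := hKc.isBounded
  have hdiam0 : 0 ≤ Metric.diam K := Metric.diam_nonneg
  -- choose the level n
  have hq : 0 < (δ / 3) / (Metric.diam K + 1) := by positivity
  obtain ⟨n₀, hn₀⟩ := ((tendsto_pow_atTop_nhds_zero_of_lt_one hρ0.le hρ1).eventually
    (gt_mem_nhds hq)).exists
  set n : ℕ := n₀ + 1 with hndef
  have hρn0 : 0 < ρ ^ n := pow_pos hρ0 n
  have hρn1 : ρ ^ n < 1 := pow_lt_one₀ hρ0.le hρ1 (by omega)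
  have hsmall : ρ ^ n * Metric.diam K < δ / 3 := by
    have h1 : ρ ^ n ≤ ρ ^ n₀ := pow_le_pow_of_le_one hρ0.le hρ1.le (by omega)
    have h2 : ρ ^ n * Metric.diam K ≤ ρ ^ n₀ * (Metric.diam K + 1) := by
      nlinarith [pow_pos hρ0 n₀]
    have h3 : ρ ^ n₀ * (Metric.diam K + 1) < δ / 3 := by
      rw [show δ / 3 = ((δ / 3) / (Metric.diam K + 1)) * (Metric.diam K + 1) by
        field_simp]
      exact mul_lt_mul_of_pos_right hn₀ (by positivity)
    linarith
  -- the two cylinders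
  obtain ⟨t₀, hcl₀, z₀, hz₀, hrep₀⟩ := cyl A b K hK n x hx
  obtain ⟨t₁, hcl₁, z₁, hz₁, hrep₁⟩ := cyl A b K hK n y hy
  set B : EuclideanSpace ℝ (Fin d) →L[ℝ] EuclideanSpace ℝ (Fin d) := A ^ n with hBdef
  have hBnorm : ∀ v : EuclideanSpace ℝ (Fin d), ‖B v‖ = ρ ^ n * ‖v‖ := fun v => norm_pow_apply hA n v
  set t : Bool → EuclideanSpace ℝ (Fin d) := fun c => cond c t₁ t₀ with htdef
  have hmaps : ∀ c : Bool, ∀ z ∈ K, B z + t c ∈ K := by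
    intro c z hz
    cases c
    · exact hcl₀ z hz
    · exact hcl₁ z hz
  have hdistB : ∀ z ∈ K, ∀ z' ∈ K, dist (B z) (B z') ≤ ρ ^ n * Metric.diam K := by
    intro z hz z' hz'
    rw [dist_eq_norm, ← map_sub, hBnorm, ← dist_eq_norm]
    exact mul_le_mul_of_nonneg_left (Metric.dist_le_diam_of_mem hbd hz hz') hρn0.le
  have hsep : ∀ z ∈ K, ∀ z' ∈ K, δ / 3 ≤ ‖(B z + t false) - (B z' + t true)‖ := by
    intro z hz z' hz'
    have e₀ : dist (B z + t₀) x ≤ ρ ^ n * Metric.diam K := by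
      rw [hrep₀, dist_add_right]
      exact hdistB z hz z₀ hz₀
    have e₁ : dist (B z' + t₁) y ≤ ρ ^ n * Metric.diam K := by
      rw [hrep₁, dist_add_right]
      exact hdistB z' hz' z₁ hz₁
    have htri := dist_triangle4 x (B z + t₀) (B z' + t₁) y
    rw [← hδdef, dist_comm x (B z + t₀)] at htri
    have : δ / 3 ≤ dist (B z + t₀) (B z' + t₁) := by linarith
    rwa [dist_eq_norm] at this
  have hε : 0 < δ / 3 := by positivity
  -- part 1
  have hrange1 : ∀ ω : ℕ → Bool, emap 1 0 ω = ω := by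
    intro ω
    funext k
    simp [emap, Nat.mod_one, Nat.div_one]
  have hdim1 : 0 < dimH (Set.range fun ω : ℕ → Bool => gmap B t (emap 1 0 ω)) :=
    dim_range_pos hρn0 hρn1 hBnorm hKcl hKne hmaps hε hsep Nat.zero_lt_one
  have hsub1 : (Set.range fun ω : ℕ → Bool => gmap B t (emap 1 0 ω)) ⊆ K := by
    rintro _ ⟨ω, rfl⟩
    exact gmap_mem hρn0 hρn1 hBnorm hKcl hKne hmaps _
  refine ⟨lt_of_lt_of_le hdim1 (dimH_mono hsub1), ?_⟩
  -- part 2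
  intro ℓ hℓ2
  have hℓ0 : 0 < ℓ := by omega
  set w : EuclideanSpace ℝ (Fin d) := gmap B t (fun _ => false) with hwdef
  set G : Fin ℓ → (ℕ → Bool) → EuclideanSpace ℝ (Fin d) := fun i ω => gmap B t (emap ℓ (i : ℕ) ω) with hGdef
  refine ⟨fun i => Set.range (fun ω => G i ω - w + (if (i : ℕ) = 0 then w else 0)), ?_, ?_, ?_⟩
  · -- compactness
    intro i
    apply isCompact_range
    exact (((gmap_continuous hρn0 hρn1 hBnorm).comp (emap_continuous ℓ i)).sub
      continuous_const).add continuous_const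
  · -- sumset ⊆ K
    rintro v ⟨f, hf, rfl⟩
    choose ω hω using fun i => hf i
    have hsum : ∑ i, f i = gmap B t (fun k => ω ⟨k % ℓ, Nat.mod_lt k hℓ0⟩ (k / ℓ)) := by
      have h1 : ∀ i, f i = (G i (ω i) - w) + (if (i : ℕ) = 0 then w else 0) :=
        fun i => (hω i).symm
      rw [Finset.sum_congr rfl (fun i _ => h1 i), Finset.sum_add_distrib]
      rw [gmap_emap_sum hρn0 hρn1 hBnorm hℓ0 ω]
      have h2 : ∑ i : Fin ℓ, (if (i : ℕ) = 0 then w else (0:EuclideanSpace ℝ (Fin d))) = w := by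
        rw [Finset.sum_eq_single (⟨0, hℓ0⟩ : Fin ℓ)]
        · rw [if_pos rfl]
        · intro i _ hne
          rw [if_neg]
          intro hcontra
          exact hne (Fin.ext hcontra)
        · intro hcontra
          exact absurd (Finset.mem_univ _) hcontra
      rw [h2, sub_add_cancel]
    rw [hsum]
    exact gmap_mem hρn0 hρn1 hBnorm hKcl hKne hmaps _
  · -- positive dimension
    intro i
    have hdim : 0 < dimH (Set.range (G i)) :=
      dim_range_pos hρn0 hρn1 hBnorm hKcl hKne hmaps hε hsep i.isLt
    have hre : (Set.range fun ω => G i ω - w + (if (i : ℕ) = 0 then w else 0))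
        = (fun x => x + ((if (i : ℕ) = 0 then w else 0) - w)) '' Set.range (G i) := by
      rw [← Set.range_comp]
      refine congrArg Set.range (funext fun ω => ?_)
      show G i ω - w + (if (i : ℕ) = 0 then w else 0)
          = G i ω + ((if (i : ℕ) = 0 then w else 0) - w)
      abel
    show 0 < dimH (Set.range fun ω => G i ω - w + (if (i : ℕ) = 0 then w else 0))
    have him : (fun x : EuclideanSpace ℝ (Fin d) => x + ((if (i : ℕ) = 0 then w else 0) - w))
        = ⇑(IsometryEquiv.addRight ((if (i : ℕ) = 0 then w else 0) - w)) := by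
      funext z
      rfl
    rw [hre, him,
      (IsometryEquiv.addRight ((if (i : ℕ) = 0 then w else 0) - w)).isometry.dimH_image]
    exact hdim
end Aux2
end

section
/- Fix α ∈ (0,1). For k ≥ 1 let m_k = (k+1)! and N_k = ⌊m_k^{1/α}⌋. Let K = {Σ_{k=1}^∞ d_k/(N₁N₂⋯N_k) : d_k ∈ {0,1,…,m_k−1}}. For ℓ ≥ 2 let m'_k = m_k/ℓ for k > ℓ and B_ℓ = {Σ_{k=ℓ+1}^∞ d_k/(N₁N₂⋯N_k) : d_k ∈ {0,1,…,m'_k−1}}. Then the ℓ-fold iterated sumset ℓB_ℓ = B_ℓ + ⋯ + B_ℓ is contained in K. -/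
set_option maxHeartbeats 1000000

open Nat

lemma stmt15_summable (N : ℕ → ℕ) (hN2 : ∀ j, 2 ≤ N j) (g : ℕ → ℕ)
    (hg : ∀ k, g k ≤ N k) :
    Summable (fun k => (g k : ℝ) / ∏ j ∈ Finset.range (k + 1), (N j : ℝ)) := by
  have hProd : ∀ k, (2 : ℝ) ^ k ≤ ∏ j ∈ Finset.range k, (N j : ℝ) := by
    intro k
    calc (2 : ℝ) ^ k = ∏ j ∈ Finset.range k, (2 : ℝ) := by simp
      _ ≤ ∏ j ∈ Finset.range k, (N j : ℝ) := by
          apply Finset.prod_le_prod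
          · intro i _; norm_num
          · intro i _; exact_mod_cast hN2 i
  have hpos : ∀ k, (0 : ℝ) < ∏ j ∈ Finset.range k, (N j : ℝ) :=
    fun k => lt_of_lt_of_le (by positivity) (hProd k)
  refine Summable.of_nonneg_of_le (fun k => by positivity) (fun k => ?_)
    (summable_geometric_of_lt_one (by norm_num) (by norm_num : (2 : ℝ)⁻¹ < 1))
  rw [Finset.prod_range_succ]
  have hNk : (0 : ℝ) < (N k : ℝ) := by
    have := hN2 k
    exact_mod_cast lt_of_lt_of_le (by norm_num) this
  have h1 : (g k : ℝ) / ((∏ j ∈ Finset.range k, (N j : ℝ)) * (N k : ℝ))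
      ≤ (N k : ℝ) / ((∏ j ∈ Finset.range k, (N j : ℝ)) * (N k : ℝ)) := by
    gcongr
    exact_mod_cast hg k
  refine h1.trans ?_
  have h2 : (N k : ℝ) / ((∏ j ∈ Finset.range k, (N j : ℝ)) * (N k : ℝ))
      = 1 / ∏ j ∈ Finset.range k, (N j : ℝ) := by
    rw [mul_comm, div_mul_cancel_left₀ hNk.ne', one_div]
  have h3 : (2 : ℝ)⁻¹ ^ k = 1 / 2 ^ k := by
    rw [inv_pow, one_div]
  rw [h2, h3]
  exact one_div_le_one_div_of_le (by positivity) (hProd k)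

/-- The Erdős–Volkmann-type example. Fix `α ∈ (0,1)`; with `m_k = (k+2)!` and
`N_k = ⌊m_k^{1/α}⌋` (indices shifted to start at `k = 0`), let
`K = {∑ₖ dₖ / (N₀⋯N_k) : dₖ ∈ {0,…,m_k − 1}}`, and for `ℓ ≥ 2` let
`B_ℓ = {∑ₖ dₖ / (N₀⋯N_k) : dₖ = 0 for k < ℓ, dₖ ∈ {0,…,m_k/ℓ − 1} for k ≥ ℓ}`.
Then the `ℓ`-fold iterated sumset `ℓ B_ℓ` is contained in `K`. -/
theorem stmt15 (α : ℝ) (hα : 0 < α ∧ α < 1)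
    (N : ℕ → ℕ) (hN : ∀ k, N k = ⌊(((k + 2)! : ℝ)) ^ (1 / α)⌋₊)
    (K : Set ℝ)
    (hK : K = {x | ∃ dd : ℕ → ℕ, (∀ k, dd k < (k + 2)!) ∧
      x = ∑' k : ℕ, (dd k : ℝ) / ∏ j ∈ Finset.range (k + 1), (N j : ℝ)})
    (B : ℕ → Set ℝ)
    (hB : ∀ ℓ, B ℓ = {x | ∃ dd : ℕ → ℕ, (∀ k < ℓ, dd k = 0) ∧
      (∀ k, ℓ ≤ k → dd k < (k + 2)! / ℓ) ∧
      x = ∑' k : ℕ, (dd k : ℝ) / ∏ j ∈ Finset.range (k + 1), (N j : ℝ)}) :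
    ∀ ℓ : ℕ, 2 ≤ ℓ →
      {x | ∃ f : Fin ℓ → ℝ, (∀ i, f i ∈ B ℓ) ∧ x = ∑ i, f i} ⊆ K := by
  intro ℓ hℓ x hx
  obtain ⟨f, hf, hxsum⟩ := hx
  simp only [hB, Set.mem_setOf_eq] at hf
  choose dd h0 hlt hfeq using hf
  -- `N j ≥ (j+2)!`
  have hNge : ∀ j, (j + 2)! ≤ N j := by
    intro j
    rw [hN j]
    apply Nat.le_floor
    have h1 : (1 : ℝ) ≤ ((j + 2)! : ℝ) := by
      exact_mod_cast Nat.one_le_iff_ne_zero.mpr (Nat.factorial_pos (j + 2)).ne'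
    calc ((j + 2)! : ℝ) = ((j + 2)! : ℝ) ^ (1 : ℝ) := (Real.rpow_one _).symm
      _ ≤ ((j + 2)! : ℝ) ^ (1 / α) := by
          apply Real.rpow_le_rpow_of_exponent_le h1
          rw [le_div_iff₀ hα.1, one_mul]
          linarith [hα.2]
  have hN2 : ∀ j, 2 ≤ N j := by
    intro j
    refine le_trans ?_ (hNge j)
    calc 2 = 2 ! := rfl
      _ ≤ (j + 2)! := Nat.factorial_le (by omega)
  -- digits are bounded
  have hddle : ∀ (i : Fin ℓ) k, dd i k ≤ N k := by
    intro i k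
    rcases lt_or_ge k ℓ with h | h
    · rw [h0 i k h]; omega
    · have h1 := hlt i k h
      have h2 := Nat.div_le_self ((k + 2)!) ℓ
      have h3 := hNge k
      omega
  have hDlt : ∀ k, (∑ i : Fin ℓ, dd i k) < (k + 2)! := by
    intro k
    rcases lt_or_ge k ℓ with h | h
    · have : ∑ i : Fin ℓ, dd i k = 0 := Finset.sum_eq_zero fun i _ => h0 i k h
      rw [this]
      exact Nat.factorial_pos _
    · have h1 : ∑ i : Fin ℓ, (dd i k + 1) ≤ ∑ _i : Fin ℓ, (k + 2)! / ℓ :=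
        Finset.sum_le_sum fun i _ => hlt i k h
      have h2 : ∑ i : Fin ℓ, (dd i k + 1) = (∑ i : Fin ℓ, dd i k) + ℓ := by
        rw [Finset.sum_add_distrib]
        simp
      have h3 : ∑ _i : Fin ℓ, (k + 2)! / ℓ = ℓ * ((k + 2)! / ℓ) := by
        simp [Finset.sum_const, mul_comm]
      have h4 : ℓ * ((k + 2)! / ℓ) ≤ (k + 2)! := Nat.mul_div_le _ _
      omega
  -- summability
  have hsum : ∀ i : Fin ℓ,
      Summable (fun k => (dd i k : ℝ) / ∏ j ∈ Finset.range (k + 1), (N j : ℝ)) :=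
    fun i => stmt15_summable N hN2 (dd i) (hddle i)
  rw [hK]
  refine ⟨fun k => ∑ i : Fin ℓ, dd i k, hDlt, ?_⟩
  calc x = ∑ i : Fin ℓ, ∑' k, (dd i k : ℝ) / ∏ j ∈ Finset.range (k + 1), (N j : ℝ) := by
        rw [hxsum]
        exact Finset.sum_congr rfl fun i _ => hfeq i
    _ = ∑' k, ∑ i : Fin ℓ, (dd i k : ℝ) / ∏ j ∈ Finset.range (k + 1), (N j : ℝ) :=
        (Summable.tsum_finsetSum fun i _ => hsum i).symm
    _ = ∑' k, ((∑ i : Fin ℓ, dd i k : ℕ) : ℝ) / ∏ j ∈ Finset.range (k + 1), (N j : ℝ) := by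
        refine tsum_congr fun k => ?_
        push_cast
        rw [Finset.sum_div]
end
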